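/- arXiv:1905.00784 — 6 statements merged into one kernel-verified Lean document; each statement's English description precedes it below -/
import Mathlib

section
/- The sequences of labeling functions (λ^k)_{k∈ℕ} computed by the fixpoint iteration are pointwise non-increasing: for every vertex v of the extended game, λ^{k+1}(v) ≤ λ^k(v); consequently the sets Λ^{k+1}(v) ⊆ Λ^k(v) of λ-consistent plays are non-increasing. -/
open scoped Classical

namespace SPE

variable {V : Type*} {P : Type*}

/-- Vertices of the extended game: a base vertex together with the set of players
having already visited their target set. -/
abbrev XV (V P : Type*) := V × Set P

/-- Edges of the extended game induced by base edges `E` and target sets `F`. -/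
def XEdge (E : V → V → Prop) (F : P → Set V) (a b : XV V P) : Prop :=
  E a.1 b.1 ∧ b.2 = a.2 ∪ {i | b.1 ∈ F i}

/-- Plays of the extended game starting at `x`. -/
def IsPlay (E : V → V → Prop) (F : P → Set V) (x : XV V P) (ρ : ℕ → XV V P) : Prop :=
  ρ 0 = x ∧ ∀ k, XEdge E F (ρ k) (ρ (k + 1))

/-- Cost of player `i` along the suffix `ρ_{≥ n}`: the least `k` such that `i` belongs to
the second component of `ρ (n + k)`, and `⊤` if there is no such `k`. -/
noncomputable def costFrom (ρ : ℕ → XV V P) (n : ℕ) (i : P) : ℕ∞ :=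
  sInf ((fun k : ℕ => (k : ℕ∞)) '' {k | i ∈ (ρ (n + k)).2})

/-- Cost of player `i` along the play `ρ` of the extended game. -/
noncomputable def cost (ρ : ℕ → XV V P) (i : P) : ℕ∞ := costFrom ρ 0 i

/-- `λ`-consistency of a play. -/
def Consistent (own : V → P) (lam : XV V P → ℕ∞) (ρ : ℕ → XV V P) : Prop :=
  ∀ n, costFrom ρ n (own (ρ n).1) ≤ lam (ρ n)

/-- The set `Λ(x)` of `λ`-consistent plays from `x`. -/
def Lam (E : V → V → Prop) (F : P → Set V) (own : V → P) (lam : XV V P → ℕ∞)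
    (x : XV V P) : Set (ℕ → XV V P) :=
  {ρ | IsPlay E F x ρ ∧ Consistent own lam ρ}

/-- The initial labeling `λ⁰`. -/
noncomputable def lam0 (own : V → P) : XV V P → ℕ∞ :=
  fun v => if own v.1 ∈ v.2 then 0 else ⊤

/-- The labeling update operator. -/
noncomputable def update (E : V → V → Prop) (F : P → Set V) (own : V → P)
    (lam : XV V P → ℕ∞) (v : XV V P) : ℕ∞ :=
  if own v.1 ∈ v.2 then 0
  else ⨅ w ∈ {w : XV V P | XEdge E F v w},
    (1 + sSup ((fun ρ => cost ρ (own v.1)) '' Lam E F own lam w))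

/-!
The update operator is monotone and `λ⁰` is a post-fixpoint of it (`update λ⁰ ≤ λ⁰`: it only
lowers `⊤` labels). Hence `update λᵏ ≤ λᵏ` is an invariant of any iteration that at each
vertex either keeps the label or applies the update, and this invariant makes each step
non-increasing. Smaller labels make consistency harder, so the sets `Λᵏ(v)` shrink too.
-/

theorem antitone_of_keep_or_apply {α β : Type*} [Preorder β] {f : (α → β) → α → β}
    (hf : Monotone f) {u : ℕ → α → β} (h0 : f (u 0) ≤ u 0)
    (hstep : ∀ k a, u (k + 1) a = u k a ∨ u (k + 1) a = f (u k) a) : Antitone u := by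
  have succ_le {k : ℕ} (hk : f (u k) ≤ u k) : u (k + 1) ≤ u k := fun a => by
    rcases hstep k a with h | h <;> rw [h]
    exact hk a
  have invariant (k : ℕ) : f (u k) ≤ u k := by
    induction k with
    | zero => exact h0
    | succ k ih =>
      intro a
      have hmono : f (u (k + 1)) a ≤ f (u k) a := hf (succ_le ih) a
      rcases hstep k a with h | h <;> rw [h]
      · exact hmono.trans (ih a)
      · exact hmono
  exact antitone_nat_of_succ_le fun k => succ_le (invariant k)

theorem Lam_mono {E : V → V → Prop} {F : P → Set V} {own : V → P}
    {lam lam' : XV V P → ℕ∞} (h : lam ≤ lam') (x : XV V P) :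
    Lam E F own lam x ⊆ Lam E F own lam' x :=
  fun _ ⟨hplay, hcons⟩ => ⟨hplay, fun n => (hcons n).trans (h _)⟩

theorem update_mono (E : V → V → Prop) (F : P → Set V) (own : V → P) :
    Monotone (update E F own) := fun lam lam' h v => by
  unfold update
  split
  · exact le_rfl
  · exact iInf₂_mono fun w _ =>
      add_le_add_right (sSup_le_sSup (Set.image_mono (Lam_mono h w))) 1

theorem update_lam0_le (E : V → V → Prop) (F : P → Set V) (own : V → P) :
    update E F own (lam0 own) ≤ lam0 own := fun v => by
  unfold update lam0
  split
  · exact le_rfl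
  · exact le_top

/-- the labeling sequence computed by the fixpoint iteration (starting
from `λ⁰`, each step either keeping a value or applying the update operator) is
pointwise non-increasing, and so are the sets of consistent plays. -/
theorem stmt4 {V P : Type*} (E : V → V → Prop) (F : P → Set V) (own : V → P)
    (lam : ℕ → XV V P → ℕ∞) (h0 : lam 0 = lam0 own)
    (hstep : ∀ k w, lam (k + 1) w = lam k w ∨
      lam (k + 1) w = update E F own (lam k) w) :
    ∀ k (v : XV V P), lam (k + 1) v ≤ lam k v ∧
      Lam E F own (lam (k + 1)) v ⊆ Lam E F own (lam k) v := by
  have hanti : Antitone lam :=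
    antitone_of_keep_or_apply (update_mono E F own) (h0 ▸ update_lam0_le E F own) hstep
  intro k v
  exact ⟨hanti k.le_succ v, Lam_mono (hanti k.le_succ) v⟩

end SPE
end

section
/- For any labeling function λ on the extended game, any vertex v, and any player i: if sup{Cost_i(ρ) | ρ ∈ Λ(v)} = +∞, then there exists a play ρ ∈ Λ(v) with Cost_i(ρ) = +∞, where Λ(v) is the set of λ-consistent plays from v. Equivalently, the supremum of costs over Λ(v) is attained as a maximum in ℕ ∪ {+∞}. -/
open scoped Classical
open Filter Topology

namespace SPE

variable {V : Type*} {P : Type*}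

lemma costFrom_le_coe (ρ : ℕ → XV V P) (n : ℕ) (i : P) (c : ℕ) :
    costFrom ρ n i ≤ (c : ℕ∞) ↔ ∃ k ≤ c, i ∈ (ρ (n + k)).2 := by
  constructor
  · intro h
    by_contra hc
    push_neg at hc
    have h1 : ((c : ℕ∞) + 1) ≤ costFrom ρ n i := by
      apply le_sInf
      rintro x ⟨k, hk, rfl⟩
      have hck : c < k := by
        by_contra hlt
        exact hc k (le_of_not_gt hlt) hk
      show ((c:ℕ∞) + 1) ≤ (k : ℕ∞)
      rw [← Nat.cast_one, ← Nat.cast_add]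
      exact_mod_cast hck
    have h2 := h1.trans h
    rw [← Nat.cast_one, ← Nat.cast_add] at h2
    exact absurd (Nat.cast_le.mp h2) (by omega)
  · rintro ⟨k, hk, hm⟩
    exact le_trans (sInf_le ⟨k, hm, rfl⟩) (show (k:ℕ∞) ≤ c from Nat.cast_le.mpr hk)

lemma costFrom_eq_top (ρ : ℕ → XV V P) (n : ℕ) (i : P)
    (h : ∀ k, i ∉ (ρ (n + k)).2) : costFrom ρ n i = ⊤ := by
  have : {k | i ∈ (ρ (n + k)).2} = ∅ := Set.eq_empty_iff_forall_notMem.2 h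
  simp [costFrom, this]

lemma sSup_mem_of_ne_top' {S : Set ℕ∞} (hne : S.Nonempty) (h : sSup S ≠ ⊤) :
    sSup S ∈ S := by
  obtain ⟨c, hc⟩ : ∃ c : ℕ, sSup S = (c : ℕ∞) := by
    cases hs : sSup S with
    | top => exact absurd hs h
    | coe c => exact ⟨c, rfl⟩
  by_contra hmem
  have hlt : ∀ s ∈ S, s < (c : ℕ∞) := by
    intro s hs
    rcases lt_or_eq_of_le (le_sSup hs) with h' | h'
    · rwa [hc] at h'
    · exact absurd (h' ▸ hs) (hc ▸ hmem)
  rcases Nat.eq_zero_or_pos c with rfl | hcpos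
  · obtain ⟨s, hs⟩ := hne
    simpa using hlt s hs
  · have h3 : sSup S ≤ ((c - 1 : ℕ) : ℕ∞) := by
      apply sSup_le
      intro s hs
      have hl := hlt s hs
      lift s to ℕ using hl.ne_top with m
      exact_mod_cast Nat.le_sub_one_of_lt (by exact_mod_cast hl)
    rw [hc] at h3
    have : c ≤ c - 1 := Nat.cast_le.mp h3
    omega


/-- if the supremum of the costs of player `i` over the `λ`-consistent
plays from `v` is infinite, then some `λ`-consistent play from `v` has infinite cost;
equivalently, the supremum is attained as a maximum in `ℕ ∪ {+∞}`. -/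
theorem stmt6 {V P : Type*} [Fintype V] [Fintype P]
    (E : V → V → Prop) (F : P → Set V) (own : V → P)
    (htot : ∀ u : V, ∃ w, E u w)
    (lam : XV V P → ℕ∞) (v : XV V P) (i : P) :
    (sSup ((fun ρ => cost ρ i) '' Lam E F own lam v) = ⊤ →
      ∃ ρ ∈ Lam E F own lam v, cost ρ i = ⊤) ∧
    ((Lam E F own lam v).Nonempty →
      ∃ ρ ∈ Lam E F own lam v, ∀ ρ' ∈ Lam E F own lam v, cost ρ' i ≤ cost ρ i) := by
  classical
  letI : TopologicalSpace (XV V P) := ⊥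
  haveI : DiscreteTopology (XV V P) := ⟨rfl⟩
  haveI : Finite (XV V P) := inferInstance
  have part1 : sSup ((fun ρ => cost ρ i) '' Lam E F own lam v) = ⊤ →
      ∃ ρ ∈ Lam E F own lam v, cost ρ i = ⊤ := by
    intro hsup
    -- a sequence of consistent plays with unbounded cost
    have hex : ∀ n : ℕ, ∃ ρ ∈ Lam E F own lam v, (n : ℕ∞) < cost ρ i := by
      intro n
      by_contra h
      push_neg at h
      have hub : sSup ((fun ρ => cost ρ i) '' Lam E F own lam v) ≤ (n : ℕ∞) := by
        apply sSup_le
        rintro x ⟨ρ, hρ, rfl⟩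
        exact h ρ hρ
      rw [hsup] at hub
      exact absurd hub (by simp)
    choose σ hσ hσc using hex
    obtain ⟨a, -, φ, hφ, hT⟩ :=
      isCompact_univ.tendsto_subseq (x := σ) (fun n => Set.mem_univ (σ n))
    -- eventual agreement on each coordinate
    have hk : ∀ k : ℕ, ∀ᶠ m in atTop, σ (φ m) k = a k := by
      intro k
      have := tendsto_pi_nhds.mp hT k
      rw [nhds_discrete] at this
      exact tendsto_pure.mp this
    have hco : ∀ N : ℕ, ∃ m : ℕ, N ≤ φ m ∧ ∀ k ≤ N, σ (φ m) k = a k := by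
      intro N
      have h1 : ∀ᶠ m in atTop, ∀ k ∈ Finset.range (N + 1), σ (φ m) k = a k :=
        Filter.eventually_all_finset _ |>.mpr (fun k _ => hk k)
      have h2 : ∀ᶠ m in atTop, N ≤ m := Filter.eventually_ge_atTop N
      obtain ⟨m, hm1, hm2⟩ := (h1.and h2).exists
      exact ⟨m, hm2.trans hφ.le_apply, fun k hkN =>
        hm1 k (Finset.mem_range.mpr (Nat.lt_succ_of_le hkN))⟩
    -- a is a play from v
    have haPlay : IsPlay E F v a := by
      constructor
      · obtain ⟨m, -, hm⟩ := hco 0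
        rw [← hm 0 le_rfl]
        exact (hσ (φ m)).1.1
      · intro k
        obtain ⟨m, -, hm⟩ := hco (k + 1)
        have e1 := hm k (Nat.le_succ k)
        have e2 := hm (k + 1) le_rfl
        rw [← e1, ← e2]
        exact (hσ (φ m)).1.2 k
    -- a is consistent
    have haCons : Consistent own lam a := by
      intro n
      cases hl : lam (a n) with
      | top => exact le_top
      | coe c =>
        obtain ⟨m, -, hm⟩ := hco (n + c)
        have han : σ (φ m) n = a n := hm n (Nat.le_add_right n c)
        have hcons := (hσ (φ m)).2 n
        rw [han, hl] at hcons
        rw [costFrom_le_coe] at hcons ⊢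
        obtain ⟨k, hkc, hmem⟩ := hcons
        refine ⟨k, hkc, ?_⟩
        rwa [← hm (n + k) (Nat.add_le_add_left hkc n)]
    -- cost of a is infinite
    have hacost : cost a i = ⊤ := by
      apply costFrom_eq_top
      intro k hk'
      obtain ⟨m, hφm, hm⟩ := hco (k + 1)
      have hagree : σ (φ m) (0 + k) = a (0 + k) := by
        simpa using hm k (Nat.le_succ k)
      have hle : cost (σ (φ m)) i ≤ (k : ℕ∞) := by
        rw [cost, costFrom_le_coe]
        exact ⟨k, le_rfl, by rw [hagree]; exact hk'⟩
      have hgt : ((k + 1 : ℕ) : ℕ∞) < cost (σ (φ m)) i :=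
        lt_of_le_of_lt (Nat.cast_le.mpr hφm) (hσc (φ m))
      have : ((k + 1 : ℕ) : ℕ∞) < (k : ℕ∞) := hgt.trans_le hle
      exact absurd (Nat.cast_lt.mp this) (by omega)
    exact ⟨a, ⟨haPlay, haCons⟩, hacost⟩
  refine ⟨part1, ?_⟩
  intro hne
  by_cases htop : sSup ((fun ρ => cost ρ i) '' Lam E F own lam v) = ⊤
  · obtain ⟨ρ, hρ, hc⟩ := part1 htop
    exact ⟨ρ, hρ, fun ρ' _ => hc ▸ le_top⟩
  · have hmem := sSup_mem_of_ne_top' (hne.image _) htop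
    obtain ⟨ρ, hρ, hc⟩ := hmem
    refine ⟨ρ, hρ, fun ρ' hρ' => ?_⟩
    calc cost ρ' i ≤ sSup ((fun ρ => cost ρ i) '' Lam E F own lam v) :=
          le_sSup ⟨ρ', hρ', rfl⟩
      _ = cost ρ i := hc.symm


end SPE
end

section
/- If σ is a subgame perfect equilibrium of the initialized extended game (X, x₀), then for every k ∈ ℕ and every history hv from x₀, the outcome of σ restricted after h starting at v is λ^k-consistent; in particular Λ^k(v) ≠ ∅ for every vertex v reachable from x₀, and the outcome of σ belongs to Λ*(x₀). -/
/-!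
By induction on `k`. Every suffix of the outcome of `σ` after a history is again the outcome of
`σ` after a longer history, so `λ`-consistency only has to be checked at the first vertex `v` of
such an outcome. If its owner `i` has not yet reached their target, compare `σ` with the one-shot
deviation that moves from `v` to a successor `w` and then follows `σ` again: subgame perfection
bounds `i`'s cost by `1 + cost_i(ρ_w)`, where `ρ_w` is the outcome of `σ` from `w`, which is
`λ^k`-consistent by induction, so the bound is at most `λ^{k+1}(v)`.
-/

open scoped Classical

namespace SPE

variable {V : Type*} {P : Type*}

/-- Prepend a finite list in front of an infinite sequence. -/
def listAppendSeq {α : Type*} (h : List α) (ρ : ℕ → α) : ℕ → α :=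
  fun k => if hk : k < h.length then h.get ⟨k, hk⟩ else ρ (k - h.length)

/-- Validity of a strategy profile in the extended game: the prescribed moves follow edges. -/
def StratValid (E : V → V → Prop) (F : P → Set V)
    (σ : List (XV V P) → XV V P → XV V P) : Prop :=
  ∀ h v, XEdge E F v (σ h v)

/-- The outcome of a strategy profile after history `h` from vertex `v`. -/
def outcome (σ : List (XV V P) → XV V P → XV V P) :
    List (XV V P) → XV V P → ℕ → XV V P
  | _, v, 0 => v
  | h, v, n + 1 => outcome σ (h ++ [v]) (σ h v) n

/-- `h·v` is a history of the initialized extended game `(X, x0)`. -/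
def IsHistoryFrom (E : V → V → Prop) (F : P → Set V) (x0 : XV V P)
    (h : List (XV V P)) (v : XV V P) : Prop :=
  (h ++ [v]).head? = some x0 ∧ (h ++ [v]).Chain' (XEdge E F)

/-- Cost of player `i` of the play `h·ρ` (cost in the subgame after `h`). -/
noncomputable def costAfter (h : List (XV V P)) (ρ : ℕ → XV V P) (i : P) : ℕ∞ :=
  sInf ((fun k : ℕ => (k : ℕ∞)) '' {k | i ∈ (listAppendSeq h ρ k).2})

/-- `τ` is a unilateral deviation of player `i` from the profile `σ`. -/
def Deviation (own : V → P) (σ τ : List (XV V P) → XV V P → XV V P) (i : P) : Prop :=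
  ∀ h v, own v.1 ≠ i → τ h v = σ h v

/-- Subgame perfect equilibrium of the initialized extended game. -/
def IsSPE (E : V → V → Prop) (F : P → Set V) (own : V → P) (x0 : XV V P)
    (σ : List (XV V P) → XV V P → XV V P) : Prop :=
  StratValid E F σ ∧
  ∀ h v, IsHistoryFrom E F x0 h v → ∀ (i : P) τ, StratValid E F τ →
    Deviation own σ τ i →
    costAfter h (outcome σ h v) i ≤ costAfter h (outcome τ h v) i

lemma sInf_natCast_image_eq_one_add {p : ℕ → Prop} (h0 : ¬ p 0) :
    sInf (((↑) : ℕ → ℕ∞) '' {k | p k}) = 1 + sInf (((↑) : ℕ → ℕ∞) '' {k | p (k + 1)}) := by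
  have hsucc : {k | p k} = Nat.succ '' {k | p (k + 1)} := by
    ext (_ | k) <;> simp [h0]
  rw [hsucc, Set.image_image, ENat.add_sInf, sInf_image, iInf_image]
  simp [add_comm]

lemma listAppendSeq_nil {α : Type*} (ρ : ℕ → α) : listAppendSeq [] ρ = ρ := by
  ext k
  simp [listAppendSeq]

lemma listAppendSeq_cons_zero {α : Type*} (x : α) (h : List α) (ρ : ℕ → α) :
    listAppendSeq (x :: h) ρ 0 = x := by
  simp [listAppendSeq]

lemma listAppendSeq_cons_succ {α : Type*} (x : α) (h : List α) (ρ : ℕ → α) (k : ℕ) :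
    listAppendSeq (x :: h) ρ (k + 1) = listAppendSeq h ρ k := by
  simp [listAppendSeq]

section Cost

variable {ρ : ℕ → XV V P} {i : P}

lemma cost_eq_zero (h : i ∈ (ρ 0).2) : cost ρ i = 0 :=
  nonpos_iff_eq_zero.mp (sInf_le ⟨0, by simpa using h, rfl⟩)

lemma cost_eq_one_add (h : i ∉ (ρ 0).2) : cost ρ i = 1 + cost (fun m => ρ (m + 1)) i := by
  simp only [cost, costFrom, zero_add]
  exact sInf_natCast_image_eq_one_add h

lemma costFrom_eq_cost (n : ℕ) : costFrom ρ n i = cost (fun m => ρ (n + m)) i := by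
  simp only [cost, costFrom, zero_add]

lemma costAfter_eq_length_add {h : List (XV V P)} (hh : ∀ x ∈ h, i ∉ x.2) :
    costAfter h ρ i = h.length + cost ρ i := by
  induction h with
  | nil => simp [costAfter, cost, costFrom, listAppendSeq_nil]
  | cons x h ih =>
    have hx : i ∉ (listAppendSeq (x :: h) ρ 0).2 := by
      simpa [listAppendSeq_cons_zero] using hh x List.mem_cons_self
    rw [costAfter, sInf_natCast_image_eq_one_add hx]
    simp only [listAppendSeq_cons_succ]
    rw [← costAfter, ih fun y hy => hh y (List.mem_cons_of_mem x hy), List.length_cons]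
    push_cast
    ring

end Cost

def historyAfter (σ : List (XV V P) → XV V P → XV V P) :
    List (XV V P) → XV V P → ℕ → List (XV V P)
  | h, _, 0 => h
  | h, v, n + 1 => historyAfter σ (h ++ [v]) (σ h v) n

section Outcome

variable {E : V → V → Prop} {F : P → Set V} {x0 : XV V P}
  {σ τ : List (XV V P) → XV V P → XV V P}

lemma outcome_historyAfter (n m : ℕ) (h : List (XV V P)) (v : XV V P) :
    outcome σ (historyAfter σ h v n) (outcome σ h v n) m = outcome σ h v (n + m) := by
  induction n generalizing h v with
  | zero => simp [historyAfter, outcome]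
  | succ n ih =>
    rw [Nat.add_right_comm]
    exact ih (h ++ [v]) (σ h v)

lemma StratValid.isPlay_outcome (hσ : StratValid E F σ) (h : List (XV V P)) (v : XV V P) :
    IsPlay E F v (outcome σ h v) := by
  refine ⟨rfl, fun k => ?_⟩
  induction k generalizing h v with
  | zero => exact hσ h v
  | succ k ih => exact ih (h ++ [v]) (σ h v)

lemma outcome_congr_of_lt_length {L : ℕ} (hagree : ∀ g u, L < g.length → τ g u = σ g u)
    (m : ℕ) (g : List (XV V P)) (u : XV V P) (hg : L < g.length) :
    outcome τ g u m = outcome σ g u m := by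
  induction m generalizing g u with
  | zero => rfl
  | succ m ih =>
    simp only [outcome, hagree g u hg]
    exact ih _ _ (by simp; omega)

lemma IsHistoryFrom.nil : IsHistoryFrom E F x0 [] x0 :=
  ⟨rfl, List.isChain_singleton x0⟩

lemma IsHistoryFrom.snoc {h : List (XV V P)} {v w : XV V P}
    (hist : IsHistoryFrom E F x0 h v) (he : XEdge E F v w) :
    IsHistoryFrom E F x0 (h ++ [v]) w := by
  obtain ⟨hhead, hchain⟩ := hist
  refine ⟨by cases h <;> simpa using hhead, List.isChain_append.mpr ⟨hchain, by simp, ?_⟩⟩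
  simp_all

lemma IsHistoryFrom.historyAfter (hσ : StratValid E F σ) {h : List (XV V P)} {v : XV V P}
    (hist : IsHistoryFrom E F x0 h v) (n : ℕ) :
    IsHistoryFrom E F x0 (historyAfter σ h v n) (outcome σ h v n) := by
  induction n generalizing h v with
  | zero => exact hist
  | succ n ih => exact ih (hist.snoc (hσ h v))

lemma IsHistoryFrom.snd_subset {h : List (XV V P)} {v : XV V P}
    (hist : IsHistoryFrom E F x0 h v) : ∀ x ∈ h, x.2 ⊆ v.2 := by
  have hchain : (h ++ [v]).IsChain (fun a b : XV V P => a.2 ⊆ b.2) :=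
    hist.2.imp fun a b (e : XEdge E F a b) => e.2 ▸ Set.subset_union_left
  have := List.pairwise_append.mp (List.isChain_iff_pairwise.mp hchain)
  exact fun x hx => this.2.2 x hx v (List.mem_singleton_self v)

lemma exists_isHistoryFrom {v : XV V P} (hr : Relation.ReflTransGen (XEdge E F) x0 v) :
    ∃ h, IsHistoryFrom E F x0 h v := by
  induction hr with
  | refl => exact ⟨[], .nil⟩
  | tail _ hbc ih =>
    obtain ⟨h, hh⟩ := ih
    exact ⟨h ++ [_], hh.snoc hbc⟩

end Outcome

section Equilibrium

variable {E : V → V → Prop} {F : P → Set V} {own : V → P} {x0 : XV V P}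
  {σ : List (XV V P) → XV V P → XV V P} {h : List (XV V P)}

lemma IsSPE.cost_outcome_le_one_add (hσ : IsSPE E F own x0 σ) {u w : XV V P}
    (hist : IsHistoryFrom E F x0 h u) (hu : own u.1 ∉ u.2) (hw : XEdge E F u w) :
    cost (outcome σ h u) (own u.1) ≤ 1 + cost (outcome σ (h ++ [u]) w) (own u.1) := by
  set τ : List (XV V P) → XV V P → XV V P := fun g x => if g = h ∧ x = u then w else σ g x
  have hτ : StratValid E F τ := by
    intro g x
    by_cases hc : g = h ∧ x = u
    · obtain ⟨rfl, rfl⟩ := hc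
      simpa only [τ, and_self, if_true] using hw
    · simpa only [τ, if_neg hc] using hσ.1 g x
  have hdev : Deviation own σ τ (own u.1) := fun g x hx =>
    if_neg fun hc : g = h ∧ x = u => hx (hc.2 ▸ rfl)
  have hτ_after : outcome τ (h ++ [u]) w = outcome σ (h ++ [u]) w := by
    funext m
    refine outcome_congr_of_lt_length (L := h.length) (fun g x hg => if_neg ?_) m _ _ (by simp)
    rintro ⟨rfl, -⟩
    exact lt_irrefl _ hg
  have hnot : ∀ x ∈ h, own u.1 ∉ x.2 := fun x hx hmem => hu (hist.snd_subset x hx hmem)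
  have hle := hσ.2 h u hist (own u.1) τ hτ hdev
  rw [costAfter_eq_length_add hnot, costAfter_eq_length_add hnot] at hle
  calc cost (outcome σ h u) (own u.1) ≤ cost (outcome τ h u) (own u.1) :=
        (WithTop.add_le_add_iff_left (ENat.natCast_ne_top _)).mp hle
    _ = 1 + cost (outcome τ (h ++ [u]) (τ h u)) (own u.1) := cost_eq_one_add (ρ := outcome τ h u) hu
    _ = 1 + cost (outcome σ (h ++ [u]) w) (own u.1) := by simp [τ, hτ_after]

lemma consistent_outcome_of_cost_le (hσ : StratValid E F σ) {lam : XV V P → ℕ∞}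
    (hcost : ∀ h v, IsHistoryFrom E F x0 h v → cost (outcome σ h v) (own v.1) ≤ lam v)
    {v : XV V P} (hist : IsHistoryFrom E F x0 h v) : Consistent own lam (outcome σ h v) := by
  intro n
  have hsuffix : (fun m => outcome σ h v (n + m))
      = outcome σ (historyAfter σ h v n) (outcome σ h v n) :=
    funext fun m => (outcome_historyAfter n m h v).symm
  rw [costFrom_eq_cost, hsuffix]
  exact hcost _ _ (hist.historyAfter hσ n)

lemma cost_le_lam0 (ρ : ℕ → XV V P) : cost ρ (own (ρ 0).1) ≤ lam0 own (ρ 0) := by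
  unfold lam0
  split_ifs with hmem
  · exact (cost_eq_zero hmem).le
  · exact le_top

lemma IsSPE.cost_outcome_le_update (hσ : IsSPE E F own x0 σ) {lam : XV V P → ℕ∞}
    {v : XV V P} (hist : IsHistoryFrom E F x0 h v)
    (hLam : ∀ w, XEdge E F v w → outcome σ (h ++ [v]) w ∈ Lam E F own lam w) :
    cost (outcome σ h v) (own v.1) ≤ update E F own lam v := by
  unfold update
  split_ifs with hmem
  · exact (cost_eq_zero (ρ := outcome σ h v) hmem).le
  · refine le_iInf₂ fun w hw => ?_
    calc cost (outcome σ h v) (own v.1)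
        ≤ 1 + cost (outcome σ (h ++ [v]) w) (own v.1) := hσ.cost_outcome_le_one_add hist hmem hw
      _ ≤ 1 + sSup ((fun ρ => cost ρ (own v.1)) '' Lam E F own lam w) := by
        gcongr
        exact le_sSup ⟨_, hLam w hw, rfl⟩

lemma IsSPE.consistent_outcome (hσ : IsSPE E F own x0 σ) {lam : ℕ → XV V P → ℕ∞}
    (h0 : lam 0 = lam0 own)
    (hstep : ∀ k w, lam (k + 1) w = lam k w ∨ lam (k + 1) w = update E F own (lam k) w)
    (k : ℕ) {v : XV V P} (hist : IsHistoryFrom E F x0 h v) :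
    Consistent own (lam k) (outcome σ h v) := by
  induction k generalizing h v with
  | zero =>
    refine consistent_outcome_of_cost_le hσ.1 (fun h v _ => ?_) hist
    rw [h0]
    exact cost_le_lam0 (outcome σ h v)
  | succ k ih =>
    refine consistent_outcome_of_cost_le hσ.1 (fun h v hist => ?_) hist
    rcases hstep k v with hk | hk <;> rw [hk]
    · exact ih hist 0
    · exact hσ.cost_outcome_le_update hist fun w hw =>
        ⟨hσ.1.isPlay_outcome _ _, ih (hist.snoc hw)⟩

end Equilibrium

theorem stmt8_general {V P : Type*}
    (E : V → V → Prop) (F : P → Set V) (own : V → P) (x0 : XV V P)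
    (σ : List (XV V P) → XV V P → XV V P) (hσ : IsSPE E F own x0 σ)
    (lam : ℕ → XV V P → ℕ∞) (h0 : lam 0 = lam0 own)
    (hstep : ∀ k w, lam (k + 1) w = lam k w ∨
      lam (k + 1) w = update E F own (lam k) w)
    (kstar : ℕ) :
    (∀ k h v, IsHistoryFrom E F x0 h v →
      Consistent own (lam k) fun n => outcome σ h v n) ∧
    (∀ v, Relation.ReflTransGen (XEdge E F) x0 v →
      (Lam E F own (lam kstar) v).Nonempty) ∧
    (fun n => outcome σ [] x0 n) ∈ Lam E F own (lam kstar) x0 := by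
  have consistent k h v (hist : IsHistoryFrom E F x0 h v) :=
    hσ.consistent_outcome h0 hstep k hist
  refine ⟨consistent, fun v hv => ?_, hσ.1.isPlay_outcome [] x0, consistent kstar [] x0 .nil⟩
  obtain ⟨h, hist⟩ := exists_isHistoryFrom hv
  exact ⟨outcome σ h v, hσ.1.isPlay_outcome h v, consistent kstar h v hist⟩

/-- if `σ` is an SPE of the initialized extended game `(X, x₀)` then,
for every `k` and every history `h·v` from `x₀`, the outcome of `σ` restricted after
`h` from `v` is `λ^k`-consistent; in particular `Λ*(v) ≠ ∅` for every `v` reachable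
from `x₀`, and the outcome of `σ` belongs to `Λ*(x₀)`. -/
theorem stmt8 {V P : Type*} [Fintype V] [Fintype P]
    (E : V → V → Prop) (F : P → Set V) (own : V → P) (x0 : XV V P)
    (σ : List (XV V P) → XV V P → XV V P) (hσ : IsSPE E F own x0 σ)
    (lam : ℕ → XV V P → ℕ∞) (h0 : lam 0 = lam0 own)
    (hstep : ∀ k w, lam (k + 1) w = lam k w ∨
      lam (k + 1) w = update E F own (lam k) w)
    (kstar : ℕ) (hfix : ∀ m, lam (kstar + m) = lam kstar) :
    (∀ k h v, IsHistoryFrom E F x0 h v →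
      Consistent own (lam k) fun n => outcome σ h v n) ∧
    (∀ v, Relation.ReflTransGen (XEdge E F) x0 v →
      (Lam E F own (lam kstar) v).Nonempty) ∧
    (fun n => outcome σ [] x0 n) ∈ Lam E F own (lam kstar) x0 :=
  stmt8_general E F own x0 σ hσ lam h0 hstep kstar

end SPE
end

section
/- Let λ be a labeling function on the extended game and 𝐂(λ) the associated counter graph. For every λ-consistent play ρ from a vertex v, there exists an infinite path π in 𝐂(λ) starting at the starting vertex v^C whose projection onto the extended-game component equals ρ. -/
open scoped Classical

namespace SPE

variable {V : Type*} {P : Type*}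

/-- Vertices of the counter graph: an extended vertex with one counter per player. -/
abbrev CV (V P : Type*) := XV V P × (P → ℕ∞)

/-- Edges of the counter graph `𝐂(λ)`. -/
def CEdge (E : V → V → Prop) (F : P → Set V) (own : V → P) (lam : XV V P → ℕ∞)
    (a b : CV V P) : Prop :=
  XEdge E F a.1 b.1 ∧
  ∀ i : P,
    (i ∈ b.1.2 ∧ b.2 i = 0) ∨
    (i ∉ b.1.2 ∧ own b.1.1 ≠ i ∧ 1 < a.2 i ∧ b.2 i = a.2 i - 1) ∨
    (i ∉ b.1.2 ∧ own b.1.1 = i ∧ 1 < a.2 i ∧ b.2 i = min (a.2 i - 1) (lam b.1))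

/-- The starting vertex `v^C` of the counter graph associated with `v`. -/
noncomputable def startC (own : V → P) (lam : XV V P → ℕ∞) (v : XV V P) : CV V P :=
  (v, fun i => if i ∈ v.2 then 0 else if own v.1 = i then lam v else ⊤)

/-- The maximal finite range of `λ` restricted to a set `S` of extended vertices. -/
noncomputable def mR (lam : XV V P → ℕ∞) (S : Set (XV V P)) : ℕ :=
  sSup {c : ℕ | ∃ w ∈ S, lam w = (c : ℕ∞)}

lemma two_le_costFrom (ρ : ℕ → XV V P) (k : ℕ) (i : P)
    (h0 : i ∉ (ρ k).2) (h1 : i ∉ (ρ (k + 1)).2) : 2 ≤ costFrom ρ k i := by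
  refine le_sInf ?_
  rintro b ⟨m, hm, rfl⟩
  have hm0 : m ≠ 0 := by rintro rfl; exact h0 hm
  have hm1 : m ≠ 1 := by rintro rfl; exact h1 hm
  show (2:ℕ∞) ≤ (m:ℕ∞)
  exact_mod_cast (by omega : 2 ≤ m)

lemma one_add_costFrom_succ_le (ρ : ℕ → XV V P) (k : ℕ) (i : P)
    (h0 : i ∉ (ρ k).2) : 1 + costFrom ρ (k + 1) i ≤ costFrom ρ k i := by
  refine le_sInf ?_
  rintro b ⟨m, hm, rfl⟩
  have hm0 : m ≠ 0 := by rintro rfl; exact h0 hm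
  obtain ⟨n, rfl⟩ : ∃ n, m = n + 1 := ⟨m - 1, by omega⟩
  have hmem : (n : ℕ∞) ∈ (fun k : ℕ => (k : ℕ∞)) '' {k' | i ∈ (ρ (k + 1 + k')).2} :=
    ⟨n, by simpa [show k + 1 + n = k + (n + 1) by ring] using hm, rfl⟩
  have h2 : costFrom ρ (k + 1) i ≤ (n : ℕ∞) := sInf_le hmem
  calc 1 + costFrom ρ (k + 1) i ≤ 1 + (n : ℕ∞) := add_le_add le_rfl h2
    _ = ((n + 1 : ℕ) : ℕ∞) := by push_cast; ring

/-- every `λ`-consistent play `ρ` from `v` lifts to an infinite path of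
the counter graph `𝐂(λ)` starting at the starting vertex `v^C` and projecting to `ρ`. -/
theorem stmt11 {V P : Type*} (E : V → V → Prop) (F : P → Set V) (own : V → P)
    (lam : XV V P → ℕ∞) (v : XV V P)
    (ρ : ℕ → XV V P) (hρ : ρ ∈ Lam E F own lam v) :
    ∃ π : ℕ → CV V P, π 0 = startC own lam v ∧
      (∀ k, CEdge E F own lam (π k) (π (k + 1))) ∧ ∀ k, (π k).1 = ρ k := by
  obtain ⟨⟨h0, hedge⟩, hcons⟩ := hρ
  -- the counters, defined recursively
  set c : ℕ → P → ℕ∞ := fun k =>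
    Nat.rec (fun i => if i ∈ v.2 then 0 else if own v.1 = i then lam v else ⊤)
      (fun k ih i => if i ∈ (ρ (k + 1)).2 then 0
        else if own (ρ (k + 1)).1 = i then min (ih i - 1) (lam (ρ (k + 1)))
        else ih i - 1) k with hc
  have hmono : ∀ k i, i ∉ (ρ (k + 1)).2 → i ∉ (ρ k).2 := by
    intro k i h hi
    exact h (by rw [(hedge k).2]; exact Or.inl hi)
  -- the invariant
  have hinv : ∀ k i, i ∉ (ρ k).2 → costFrom ρ k i ≤ c k i := by
    intro k
    induction k with
    | zero =>
      intro i hi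
      rw [h0] at hi
      show costFrom ρ 0 i ≤ if i ∈ v.2 then 0 else if own v.1 = i then lam v else ⊤
      simp only [hi, if_false]
      split
      · next h' =>
        have := hcons 0
        rw [h0, h'] at this
        simpa [h0] using this
      · exact le_top
    | succ k ih =>
      intro i hi
      have hik : i ∉ (ρ k).2 := hmono k i hi
      have hle : 1 + costFrom ρ (k + 1) i ≤ c k i :=
        (one_add_costFrom_succ_le ρ k i hik).trans (ih i hik)
      have hsub : costFrom ρ (k + 1) i ≤ c k i - 1 :=
        ENat.le_sub_of_add_le_left (by norm_num) hle
      show costFrom ρ (k+1) i ≤ if i ∈ (ρ (k + 1)).2 then 0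
        else if own (ρ (k + 1)).1 = i then min (c k i - 1) (lam (ρ (k + 1))) else c k i - 1
      simp only [hi, if_false]
      split
      · next h' =>
        refine le_min hsub ?_
        have := hcons (k + 1)
        rwa [h'] at this
      · exact hsub
  refine ⟨fun k => (ρ k, c k), ?_, ?_, fun k => rfl⟩
  · simp only [startC, Prod.mk.injEq]
    exact ⟨h0, rfl⟩
  · intro k
    refine ⟨hedge k, fun i => ?_⟩
    by_cases hi : i ∈ (ρ (k + 1)).2
    · exact Or.inl ⟨hi, show (if i ∈ (ρ (k + 1)).2 then 0
        else if own (ρ (k + 1)).1 = i then min (c k i - 1) (lam (ρ (k + 1))) else c k i - 1) = 0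
        from by simp [hi]⟩
    · have hik : i ∉ (ρ k).2 := hmono k i hi
      have h2 : 1 < c k i :=
        lt_of_lt_of_le (by norm_num : (1:ℕ∞) < 2) ((two_le_costFrom ρ k i hik hi).trans (hinv k i hik))
      by_cases ho : own (ρ (k + 1)).1 = i
      · exact Or.inr (Or.inr ⟨hi, ho, h2, show (if i ∈ (ρ (k + 1)).2 then 0
          else if own (ρ (k + 1)).1 = i then min (c k i - 1) (lam (ρ (k + 1))) else c k i - 1) = _
          from by simp [hi, ho]⟩)
      · exact Or.inr (Or.inl ⟨hi, ho, h2, show (if i ∈ (ρ (k + 1)).2 then 0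
          else if own (ρ (k + 1)).1 = i then min (c k i - 1) (lam (ρ (k + 1))) else c k i - 1) = _
          from by simp [hi, ho]⟩)

end SPE
end

section
/- Let λ be a labeling, v^C a starting vertex of the counter graph associated with v where I(v) = J_ℓ, and π a cycle-free finite prefix of an infinite path of 𝐂(λ) starting at v^C. Then |π| ≤ |V| + 2·mR(λ_ℓ) + Σ_{r=|J_ℓ|+1}^{|Π|} ( |V| + 2·max{mR(λ_j) : J_j > J_ℓ, |J_j| = r} ), where mR(λ_j) is the maximal finite value of λ restricted to region V^{J_j}. -/
open scoped Classical

namespace SPE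

variable {V : Type*} {P : Type*}

/-!
Along a path of `𝐂(λ)` the region only grows, so the positions `k ≤ t` fall into blocks according
to the size of the region, one for each size between `|J_ℓ|` and `|Π|`. A position of a block whose
counters off the region are all `+∞` is determined by its base vertex, so a cycle-free path has at
most `|V|` of them per block. Every other position carries a finite counter, which was set to a value
of `λ`, at most `mR` of the block where it was set, and then drops by one per step. Hence the active
stretch of a block is paid for either by its own `mR` or by the `mR` of the earlier block where its
counter was set, and amortizing over the blocks every `mR` pays at most twice.
-/

/-- The extra `B r` on the left is the credit that later blocks may still draw on. -/
theorem sum_Ico_add_le_of_amortized {a B q : ℕ → ℕ} {s : ℕ}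
    (h : ∀ r, s ≤ r → a r ≤ B r + q r ∨
      ∃ r₀, s ≤ r₀ ∧ r₀ < r ∧ ∑ i ∈ Finset.Ico (r₀ + 1) (r + 1), a i ≤ B r₀)
    {r : ℕ} (hr : s ≤ r) :
    ∑ i ∈ Finset.Ico s (r + 1), a i + B r ≤ ∑ i ∈ Finset.Ico s (r + 1), (2 * B i + q i) := by
  induction r using Nat.strong_induction_on with
  | _ r ih =>
  rcases h r hr with hlocal | ⟨r₀, hs₀, hr₀, hcarry⟩
  · have hprev : ∑ i ∈ Finset.Ico s r, a i ≤ ∑ i ∈ Finset.Ico s r, (2 * B i + q i) := by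
      rcases hr.eq_or_lt with rfl | hlt
      · simp
      · obtain ⟨r', rfl⟩ : ∃ r', r = r' + 1 := ⟨r - 1, by omega⟩
        have := ih r' (by omega) (by omega)
        omega
    rw [Finset.sum_Ico_succ_top hr, Finset.sum_Ico_succ_top hr]
    omega
  · have hold := ih r₀ hr₀ hs₀
    have hsub : ∑ i ∈ Finset.Ico s (r₀ + 1), (2 * B i + q i) ≤
        ∑ i ∈ Finset.Ico s r, (2 * B i + q i) :=
      Finset.sum_le_sum_of_subset (Finset.Ico_subset_Ico_right hr₀)
    rw [← Finset.sum_Ico_consecutive a (by omega : s ≤ r₀ + 1) (by omega : r₀ + 1 ≤ r + 1),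
      Finset.sum_Ico_succ_top hr]
    omega

theorem le_mR {lam : XV V P → ℕ∞} {S : Set (XV V P)} {w : XV V P} (hS : S.Finite)
    (hw : w ∈ S) (h : lam w ≠ ⊤) : lam w ≤ mR lam S := by
  rw [← ENat.natCast_toNat h, Nat.cast_le]
  refine le_csSup ((hS.image fun w => (lam w).toNat).bddAbove.mono ?_)
    ⟨w, hw, (ENat.natCast_toNat h).symm⟩
  rintro c ⟨w', hw', hc⟩
  exact ⟨w', hw', by simp [hc]⟩

section CounterPath

variable {E : V → V → Prop} {F : P → Set V} {own : V → P} {lam : XV V P → ℕ∞}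
  {π : ℕ → CV V P} {v : XV V P} {i : P} {k : ℕ}

theorem region_mono (hπ : ∀ k, CEdge E F own lam (π k) (π (k + 1))) :
    Monotone fun k => (π k).1.2 :=
  monotone_nat_of_le_succ fun k => by rw [(hπ k).1.2]; exact Set.subset_union_left

theorem ncard_region_le [Finite P] (hπ : ∀ k, CEdge E F own lam (π k) (π (k + 1)))
    {m n : ℕ} (h : m ≤ n) : (π m).1.2.ncard ≤ (π n).1.2.ncard :=
  Set.ncard_le_ncard (region_mono hπ h)

theorem reflTransGen_fst (hπ : ∀ k, CEdge E F own lam (π k) (π (k + 1))) (k : ℕ) :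
    Relation.ReflTransGen (XEdge E F) (π 0).1 (π k).1 := by
  induction k with
  | zero => exact .refl
  | succ k ih => exact ih.tail (hπ k).1

theorem one_lt_counter_of_notMem_succ (hπ : ∀ k, CEdge E F own lam (π k) (π (k + 1)))
    (hi : i ∉ (π (k + 1)).1.2) : 1 < (π k).2 i := by
  rcases (hπ k).2 i with ⟨h, -⟩ | ⟨-, -, h, -⟩ | ⟨-, -, h, -⟩
  exacts [absurd h hi, h, h]

theorem counter_succ_add_one_le (hπ : ∀ k, CEdge E F own lam (π k) (π (k + 1)))
    (hi : i ∉ (π (k + 1)).1.2) : (π (k + 1)).2 i + 1 ≤ (π k).2 i := by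
  have hle : (π (k + 1)).2 i ≤ (π k).2 i - 1 := by
    rcases (hπ k).2 i with ⟨h, -⟩ | ⟨-, -, -, h⟩ | ⟨-, -, -, h⟩
    exacts [absurd h hi, h.le, h.le.trans (min_le_left _ _)]
  calc (π (k + 1)).2 i + 1 ≤ (π k).2 i - 1 + 1 := by gcongr
    _ = (π k).2 i := tsub_add_cancel_of_le (one_lt_counter_of_notMem_succ hπ hi).le

theorem counter_add_sub_le (hπ : ∀ k, CEdge E F own lam (π k) (π (k + 1))) {m n : ℕ}
    (hmn : m ≤ n) (hi : i ∉ (π n).1.2) : (π n).2 i + (n - m : ℕ) ≤ (π m).2 i := by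
  induction n, hmn using Nat.le_induction with
  | base => simp
  | succ n hmn ih =>
    calc (π (n + 1)).2 i + (n + 1 - m : ℕ) = (π (n + 1)).2 i + 1 + (n - m : ℕ) := by
          rw [Nat.sub_add_comm hmn]; push_cast; ring
      _ ≤ (π n).2 i + (n - m : ℕ) := by gcongr; exact counter_succ_add_one_le hπ hi
      _ ≤ (π m).2 i := ih fun h => hi (region_mono hπ n.le_succ h)

theorem counter_eq_zero_of_mem (hπ : ∀ k, CEdge E F own lam (π k) (π (k + 1)))
    (hπ0 : π 0 = startC own lam v) (hi : i ∈ (π k).1.2) : (π k).2 i = 0 := by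
  cases k with
  | zero => rw [hπ0] at hi ⊢; simp only [startC] at hi ⊢; simp [hi]
  | succ k =>
    rcases (hπ k).2 i with ⟨-, h⟩ | ⟨h, -⟩ | ⟨h, -⟩
    exacts [h, absurd hi h, absurd hi h]

theorem counter_le_lam (hπ : ∀ k, CEdge E F own lam (π k) (π (k + 1)))
    (hπ0 : π 0 = startC own lam v) (hi : own (π k).1.1 ∉ (π k).1.2) :
    (π k).2 (own (π k).1.1) ≤ lam (π k).1 := by
  cases k with
  | zero => rw [hπ0] at hi ⊢; simp only [startC] at hi ⊢; simp [hi]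
  | succ k =>
    rcases (hπ k).2 (own (π (k + 1)).1.1) with ⟨h, -⟩ | ⟨-, h, -⟩ | ⟨-, -, -, h⟩
    · exact absurd h hi
    · exact absurd rfl h
    · exact h ▸ min_le_right _ _

theorem lam_eq_zero_of_counter_eq_zero (hπ : ∀ k, CEdge E F own lam (π k) (π (k + 1)))
    (hπ0 : π 0 = startC own lam v) (hi : i ∉ (π k).1.2) (h0 : (π k).2 i = 0) :
    own (π k).1.1 = i ∧ lam (π k).1 = 0 := by
  cases k with
  | zero =>
    rw [hπ0] at hi h0 ⊢
    simp only [startC] at hi h0 ⊢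
    by_cases ho : own v.1 = i
    · simp_all
    · simp [hi, ho] at h0
  | succ k =>
    have h1 := one_lt_counter_of_notMem_succ hπ hi
    have hpos : (π k).2 i - 1 ≠ 0 := (tsub_pos_of_lt h1).ne'
    rcases (hπ k).2 i with ⟨h, -⟩ | ⟨-, -, -, h⟩ | ⟨-, ho, -, h⟩
    · exact absurd h hi
    · exact absurd (h ▸ h0) hpos
    · refine ⟨ho, ?_⟩
      rcases min_choice ((π k).2 i - 1) (lam (π (k + 1)).1) with hm | hm
      · exact absurd (hm ▸ h ▸ h0) hpos
      · exact hm ▸ h ▸ h0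

theorem exists_counter_eq_lam (hπ : ∀ k, CEdge E F own lam (π k) (π (k + 1)))
    (hπ0 : π 0 = startC own lam v) (hi : i ∉ (π k).1.2) (hfin : (π k).2 i ≠ ⊤) :
    ∃ b ≤ k, (π b).2 i = lam (π b).1 ∧ (π b).2 i ≠ ⊤ := by
  induction k with
  | zero =>
    refine ⟨0, le_rfl, ?_, hfin⟩
    rw [hπ0] at hi hfin ⊢
    simp only [startC] at hi hfin ⊢
    by_cases ho : own v.1 = i
    · simp [hi, ho]
    · simp [hi, ho] at hfin
  | succ k ih =>
    by_cases htop : (π k).2 i = ⊤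
    · refine ⟨k + 1, le_rfl, ?_, hfin⟩
      rcases (hπ k).2 i with ⟨h, -⟩ | ⟨-, -, -, h⟩ | ⟨-, -, -, h⟩
      · exact absurd h hi
      · simp [h, htop] at hfin
      · simp [h, htop]
    · obtain ⟨b, hb, h⟩ := ih (fun h => hi (region_mono hπ k.le_succ h)) htop
      exact ⟨b, hb.trans k.le_succ, h⟩

end CounterPath

/-- The paper's region sections, indexed by the number of players in the region. -/
noncomputable def block (π : ℕ → CV V P) (t r : ℕ) : Finset ℕ :=
  (Finset.range (t + 1)).filter fun k => (π k).1.2.ncard = r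

def IsCalm (π : ℕ → CV V P) (k : ℕ) : Prop :=
  ∀ i ∉ (π k).1.2, (π k).2 i = ⊤

noncomputable def calmPart (π : ℕ → CV V P) (t r : ℕ) : Finset ℕ :=
  (block π t r).filter (IsCalm π)

noncomputable def activePart (π : ℕ → CV V P) (t r : ℕ) : Finset ℕ :=
  (block π t r).filter fun k => ¬IsCalm π k

noncomputable def regionBound (lam : XV V P → ℕ∞) (π : ℕ → CV V P) (t r : ℕ) : ℕ :=
  (block π t r).sup fun k => mR lam {w | w.2 = (π k).1.2}

section Blocks

variable {E : V → V → Prop} {F : P → Set V} {own : V → P} {lam : XV V P → ℕ∞}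
  {π : ℕ → CV V P} {v : XV V P} {t r k : ℕ}

theorem mem_block : k ∈ block π t r ↔ k ≤ t ∧ (π k).1.2.ncard = r := by
  simp [block]

theorem region_eq_of_mem_block [Finite P] (hπ : ∀ k, CEdge E F own lam (π k) (π (k + 1)))
    {k₁ k₂ : ℕ} (h₁ : k₁ ∈ block π t r) (h₂ : k₂ ∈ block π t r) : (π k₁).1.2 = (π k₂).1.2 := by
  rw [mem_block] at h₁ h₂
  rcases le_total k₁ k₂ with h | h
  · exact Set.eq_of_subset_of_ncard_le (region_mono hπ h) (h₂.2.trans h₁.2.symm).le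
  · exact (Set.eq_of_subset_of_ncard_le (region_mono hπ h) (h₁.2.trans h₂.2.symm).le).symm

theorem counter_eq_of_isCalm (hπ : ∀ k, CEdge E F own lam (π k) (π (k + 1)))
    (hπ0 : π 0 = startC own lam v) (h : IsCalm π k) :
    (π k).2 = fun i => if i ∈ (π k).1.2 then 0 else ⊤ := by
  funext i
  split_ifs with hi
  exacts [counter_eq_zero_of_mem hπ hπ0 hi, h i hi]

theorem injOn_calmPart [Finite P] (hπ : ∀ k, CEdge E F own lam (π k) (π (k + 1)))
    (hπ0 : π 0 = startC own lam v) (hnocycle : Set.InjOn π (Set.Iic t)) :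
    Set.InjOn (fun k => (π k).1.1) (calmPart π t r) := by
  intro k₁ h₁ k₂ h₂ hbase
  simp only [calmPart, Finset.coe_filter] at h₁ h₂
  have hx : (π k₁).1 = (π k₂).1 := Prod.ext hbase (region_eq_of_mem_block hπ h₁.1 h₂.1)
  refine hnocycle (mem_block.1 h₁.1).1 (mem_block.1 h₂.1).1 (Prod.ext hx ?_)
  rw [counter_eq_of_isCalm hπ hπ0 h₁.2, counter_eq_of_isCalm hπ hπ0 h₂.2, hx]

theorem card_calmPart_le [Fintype V] [Finite P]
    (hπ : ∀ k, CEdge E F own lam (π k) (π (k + 1))) (hπ0 : π 0 = startC own lam v)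
    (hnocycle : Set.InjOn π (Set.Iic t)) : (calmPart π t r).card ≤ Fintype.card V :=
  Finset.card_le_card_of_injOn _ (fun _ _ => Finset.mem_univ _) (injOn_calmPart hπ hπ0 hnocycle)

/-- At `(π f).1` the owner's counter is at most `λ = 0`, so no calm position visits it. -/
theorem card_calmPart_lt [Fintype V] [Finite P]
    (hπ : ∀ k, CEdge E F own lam (π k) (π (k + 1))) (hπ0 : π 0 = startC own lam v)
    (hnocycle : Set.InjOn π (Set.Iic t)) {f : ℕ} (hf : f ∈ block π t r)
    (hown : own (π f).1.1 ∉ (π f).1.2) (hlam : lam (π f).1 = 0) :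
    (calmPart π t r).card < Fintype.card V := by
  have hmaps : Set.MapsTo (fun k => (π k).1.1) (calmPart π t r)
      (Finset.univ.erase (π f).1.1) := by
    intro k hk
    simp only [calmPart, Finset.coe_filter] at hk
    refine Finset.mem_erase.2 ⟨fun hbase => ?_, Finset.mem_univ _⟩
    have hx : (π k).1 = (π f).1 := Prod.ext hbase (region_eq_of_mem_block hπ hk.1 hf)
    have hle := counter_le_lam hπ hπ0 (k := k) (by rw [hx]; exact hown)
    rw [hk.2 _ (by rw [hx]; exact hown), hx, hlam] at hle
    exact absurd hle (by simp)
  have := Finset.card_le_card_of_injOn _ hmaps (injOn_calmPart hπ hπ0 hnocycle)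
  rw [Finset.card_erase_of_mem (Finset.mem_univ _), Finset.card_univ] at this
  have : 0 < Fintype.card V := Fintype.card_pos_iff.2 ⟨(π f).1.1⟩
  omega

theorem lam_le_regionBound [Finite V] [Finite P] {b : ℕ} (hb : b ∈ block π t r)
    (h : lam (π b).1 ≠ ⊤) : lam (π b).1 ≤ regionBound lam π t r :=
  (le_mR (S := {w | w.2 = (π b).1.2}) (Set.toFinite _) rfl h).trans
    (Nat.cast_le.2 (Finset.le_sup (f := fun k => mR lam {w | w.2 = (π k).1.2}) hb))

theorem sum_card_activePart_le {T X : Finset ℕ} (h : ∀ r ∈ T, activePart π t r ⊆ X) :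
    ∑ r ∈ T, (activePart π t r).card ≤ X.card := by
  have hdisj : (T : Set ℕ).PairwiseDisjoint (activePart π t) := by
    intro r₁ _ r₂ _ hne
    refine Finset.disjoint_left.2 fun k h₁ h₂ => hne ?_
    simp only [activePart, Finset.mem_filter, mem_block] at h₁ h₂
    exact h₁.1.2.symm.trans h₂.1.2
  rw [← Finset.card_biUnion hdisj]
  exact Finset.card_le_card (Finset.biUnion_subset.2 h)

theorem activePart_subset_Ioc [Finite P] (hπ : ∀ k, CEdge E F own lam (π k) (π (k + 1)))
    {b e r' : ℕ} (he : e ∈ block π t r) (hmax : ∀ k ∈ activePart π t r, k ≤ e)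
    (h₀ : (π b).1.2.ncard < r') (hr' : r' ≤ r) : activePart π t r' ⊆ Finset.Ioc b e := by
  intro k hk
  have hk' := hk
  simp only [activePart, Finset.mem_filter, mem_block] at hk' he
  refine Finset.mem_Ioc.2 ⟨?_, ?_⟩
  · by_contra! hkb
    have := ncard_region_le hπ hkb
    omega
  · by_contra! hek
    have := ncard_region_le hπ hek.le
    obtain rfl : r' = r := by omega
    exact absurd (hmax k hk) (by omega)

/-- `b` is where the finite counter `i` of `f` was last set to a value of `λ`. -/
theorem exists_counter_add_le_regionBound [Finite V] [Finite P]
    (hπ : ∀ k, CEdge E F own lam (π k) (π (k + 1))) (hπ0 : π 0 = startC own lam v)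
    {f e : ℕ} (hf : f ∈ activePart π t r) (he : e ∈ block π t r) (hfe : f ≤ e) :
    ∃ i b, b ≤ f ∧ i ∉ (π e).1.2 ∧ b ∈ activePart π t (π b).1.2.ncard ∧
      (π e).2 i + (e - b : ℕ) ≤ regionBound lam π t (π b).1.2.ncard := by
  have hf' := Finset.mem_filter.1 hf
  obtain ⟨i, hi, hfin⟩ : ∃ i ∉ (π f).1.2, (π f).2 i ≠ ⊤ := by simpa [IsCalm] using hf'.2
  obtain ⟨b, hbf, hb, hbfin⟩ := exists_counter_eq_lam hπ hπ0 hi hfin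
  have hbblock : b ∈ block π t (π b).1.2.ncard :=
    mem_block.2 ⟨hbf.trans (mem_block.1 hf'.1).1, rfl⟩
  have hie : i ∉ (π e).1.2 := region_eq_of_mem_block hπ hf'.1 he ▸ hi
  refine ⟨i, b, hbf, hie, Finset.mem_filter.2 ⟨hbblock, fun hcalm => hbfin (hcalm i ?_)⟩, ?_⟩
  · exact fun h => hi (region_mono hπ hbf h)
  calc (π e).2 i + (e - b : ℕ) ≤ (π b).2 i := counter_add_sub_le hπ (hbf.trans hfe) hie
    _ = lam (π b).1 := hb
    _ ≤ regionBound lam π t (π b).1.2.ncard := lam_le_regionBound hbblock (hb ▸ hbfin)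

/-- If the counter of `exists_counter_add_le_regionBound` was set in the same block, that block
is active for at most `regionBound` steps, one more if the counter ends at `0`, which a calm
position pays for. Otherwise the active parts of all blocks after the one of `b`, up to this one,
fit into `(b, e]`. -/
theorem card_activePart_le_or_carry [Fintype V] [Fintype P]
    (hπ : ∀ k, CEdge E F own lam (π k) (π (k + 1))) (hπ0 : π 0 = startC own lam v)
    (hnocycle : Set.InjOn π (Set.Iic t)) (r : ℕ) :
    (activePart π t r).card ≤ regionBound lam π t r + (Fintype.card V - (calmPart π t r).card) ∨
    ∃ r₀, (π 0).1.2.ncard ≤ r₀ ∧ r₀ < r ∧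
      ∑ r' ∈ Finset.Ico (r₀ + 1) (r + 1), (activePart π t r').card ≤ regionBound lam π t r₀ := by
  rcases (activePart π t r).eq_empty_or_nonempty with hA | hA
  · simp [hA]
  obtain ⟨f, hfA, hmin⟩ : ∃ f ∈ activePart π t r, ∀ k ∈ activePart π t r, f ≤ k :=
    ⟨_, Finset.min'_mem _ hA, fun k hk => Finset.min'_le _ k hk⟩
  obtain ⟨e, heA, hmax⟩ : ∃ e ∈ activePart π t r, ∀ k ∈ activePart π t r, k ≤ e :=
    ⟨_, Finset.max'_mem _ hA, fun k hk => Finset.le_max' _ k hk⟩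
  have he := (Finset.mem_filter.1 heA).1
  have hfr := (mem_block.1 (Finset.mem_filter.1 hfA).1).2
  obtain ⟨i, b, hbf, hie, hbA, hspan⟩ :=
    exists_counter_add_le_regionBound hπ hπ0 hfA he (hmin e heA)
  have hspan₁ : e - b ≤ regionBound lam π t (π b).1.2.ncard :=
    Nat.cast_le.1 (le_add_self.trans hspan)
  rcases (ncard_region_le hπ hbf).eq_or_lt with hr₀ | hr₀
  · left
    rw [hfr] at hr₀
    rw [hr₀] at hspan hspan₁ hbA
    have hcard : (activePart π t r).card ≤ e + 1 - f := by
      simpa using Finset.card_le_card fun k hk => Finset.mem_Icc.2 ⟨hmin k hk, hmax k hk⟩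
    have hfb := hmin b hbA
    by_cases hz : (π e).2 i = 0
    · obtain ⟨hown, hlam⟩ := lam_eq_zero_of_counter_eq_zero hπ hπ0 hie hz
      have := card_calmPart_lt hπ hπ0 hnocycle he (hown ▸ hie) hlam
      omega
    · have hspan₂ : ((e - b + 1 : ℕ) : ℕ∞) ≤ regionBound lam π t r :=
        calc ((e - b + 1 : ℕ) : ℕ∞) = 1 + (e - b : ℕ) := by push_cast; ring
          _ ≤ (π e).2 i + (e - b : ℕ) := by gcongr; exact Order.one_le_iff_ne_zero.2 hz
          _ ≤ _ := hspan
      have := Nat.cast_le.1 hspan₂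
      omega
  · refine .inr ⟨_, ncard_region_le hπ (Nat.zero_le b), hfr ▸ hr₀, ?_⟩
    refine (sum_card_activePart_le fun r' hr' => ?_).trans (by rw [Nat.card_Ioc]; exact hspan₁)
    rw [Finset.mem_Ico] at hr'
    exact activePart_subset_Ioc hπ he hmax (by omega) (by omega)

theorem succ_le_sum_regionBound [Fintype V] [Fintype P]
    (hπ : ∀ k, CEdge E F own lam (π k) (π (k + 1))) (hπ0 : π 0 = startC own lam v)
    (hnocycle : Set.InjOn π (Set.Iic t)) :
    t + 1 ≤ ∑ r ∈ Finset.Icc (π 0).1.2.ncard (Fintype.card P),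
      (Fintype.card V + 2 * regionBound lam π t r) := by
  have hcardP : ∀ k, (π k).1.2.ncard ≤ Fintype.card P := fun k =>
    (Set.ncard_le_card _).trans_eq Nat.card_eq_fintype_card
  have hpart : t + 1 = ∑ r ∈ Finset.Icc (π 0).1.2.ncard (Fintype.card P), (block π t r).card := by
    simpa [block] using Finset.card_eq_sum_card_fiberwise (s := Finset.range (t + 1))
      (t := Finset.Icc (π 0).1.2.ncard (Fintype.card P)) (f := fun k => (π k).1.2.ncard)
      fun k _ => Finset.mem_Icc.2 ⟨ncard_region_le hπ (Nat.zero_le k), hcardP k⟩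
  have hamort := sum_Ico_add_le_of_amortized (s := (π 0).1.2.ncard)
    (fun r _ => card_activePart_le_or_carry hπ hπ0 hnocycle r) (hcardP 0)
  rw [Finset.Ico_add_one_right_eq_Icc] at hamort
  calc t + 1 = ∑ r ∈ Finset.Icc (π 0).1.2.ncard (Fintype.card P),
        ((calmPart π t r).card + (activePart π t r).card) := by
        rw [hpart]
        exact Finset.sum_congr rfl fun r _ => (Finset.card_filter_add_card_filter_not _).symm
    _ ≤ ∑ r ∈ Finset.Icc (π 0).1.2.ncard (Fintype.card P), ((calmPart π t r).card +
        (2 * regionBound lam π t r + (Fintype.card V - (calmPart π t r).card))) := by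
        rw [Finset.sum_add_distrib, Finset.sum_add_distrib]
        omega
    _ = _ := Finset.sum_congr rfl fun r _ => by
        have := card_calmPart_le (r := r) hπ hπ0 hnocycle
        omega

end Blocks

section RegionBound

variable {E : V → V → Prop} {F : P → Set V} {own : V → P} {lam : XV V P → ℕ∞}
  {π : ℕ → CV V P} {t : ℕ}

theorem regionBound_ncard_region_zero_le [Finite P]
    (hπ : ∀ k, CEdge E F own lam (π k) (π (k + 1))) :
    regionBound lam π t (π 0).1.2.ncard ≤ mR lam {w | w.2 = (π 0).1.2} :=
  Finset.sup_le fun k hk => by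
    rw [region_eq_of_mem_block hπ hk (mem_block.2 ⟨Nat.zero_le t, rfl⟩)]

theorem regionBound_le_sSup [Finite P] (hπ : ∀ k, CEdge E F own lam (π k) (π (k + 1)))
    {N ℓ r : ℕ} {J : ℕ → Set P}
    (hmono : ∀ a b, 1 ≤ a → a ≤ N → 1 ≤ b → b ≤ N → J a ⊆ J b → a ≤ b)
    (hℓ1 : 1 ≤ ℓ) (hℓN : ℓ ≤ N) (hR0 : (π 0).1.2 = J ℓ)
    (hcover : ∀ w : XV V P, Relation.ReflTransGen (XEdge E F) (π 0).1 w →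
      ∃ j, 1 ≤ j ∧ j ≤ N ∧ w.2 = J j)
    (hr : (J ℓ).ncard < r) :
    regionBound lam π t r ≤ sSup {c : ℕ | ∃ j, ℓ < j ∧ j ≤ N ∧
      (J j).ncard = r ∧ c = mR lam {w | w.2 = J j}} := by
  refine Finset.sup_le fun k hk => ?_
  obtain ⟨j, hj1, hjN, hj⟩ := hcover _ (reflTransGen_fst hπ k)
  have hkr := (mem_block.1 hk).2
  have hℓj : ℓ < j := by
    refine (hmono ℓ j hℓ1 hℓN hj1 hjN (hR0 ▸ hj ▸ region_mono hπ (Nat.zero_le k))).lt_of_ne ?_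
    rintro rfl
    rw [hj] at hkr
    omega
  have hbdd : BddAbove {c : ℕ | ∃ j, ℓ < j ∧ j ≤ N ∧
      (J j).ncard = r ∧ c = mR lam {w | w.2 = J j}} := by
    refine ((Set.finite_Iic N).image fun j => mR lam {w | w.2 = J j}).bddAbove.mono ?_
    rintro c ⟨j, -, hjN, -, rfl⟩
    exact ⟨j, hjN, rfl⟩
  exact le_csSup hbdd ⟨j, hℓj, hjN, hj ▸ hkr, by rw [hj]⟩

end RegionBound

/-- length bound for cycle-free finite prefixes of infinite paths of
the counter graph `𝐂(λ)` starting at `v^C`, with `I(v) = J ℓ`. -/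
theorem stmt13 {V P : Type*} [Fintype V] [Fintype P]
    (E : V → V → Prop) (F : P → Set V) (own : V → P) (lam : XV V P → ℕ∞)
    (N : ℕ) (J : ℕ → Set P)
    (hmono : ∀ a b, 1 ≤ a → a ≤ N → 1 ≤ b → b ≤ N → J a ⊆ J b → a ≤ b)
    (ℓ : ℕ) (hℓ1 : 1 ≤ ℓ) (hℓN : ℓ ≤ N)
    (v : XV V P) (hv : v.2 = J ℓ)
    (hcover : ∀ w : XV V P, Relation.ReflTransGen (XEdge E F) v w →
      ∃ j, 1 ≤ j ∧ j ≤ N ∧ w.2 = J j)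
    (π : ℕ → CV V P) (hπ0 : π 0 = startC own lam v)
    (hπ : ∀ k, CEdge E F own lam (π k) (π (k + 1)))
    (t : ℕ) (hnocycle : Set.InjOn π (Set.Iic t)) :
    t ≤ Fintype.card V + 2 * mR lam {w | w.2 = J ℓ} +
      ∑ r ∈ Finset.Icc ((J ℓ).ncard + 1) (Fintype.card P),
        (Fintype.card V + 2 * sSup {c : ℕ | ∃ j, ℓ < j ∧ j ≤ N ∧
          (J j).ncard = r ∧ c = mR lam {w | w.2 = J j}}) := by
  have hv0 : (π 0).1 = v := by rw [hπ0]; rfl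
  rw [← hv0] at hv hcover
  have hbound := succ_le_sum_regionBound hπ hπ0 hnocycle
  rw [← Finset.sum_Ioc_add_eq_sum_Icc ((Set.ncard_le_card _).trans_eq Nat.card_eq_fintype_card),
    ← Finset.Icc_add_one_left_eq_Ioc, hv] at hbound
  calc t ≤ _ := Nat.le_of_succ_le hbound
    _ ≤ _ := by
      rw [add_comm]
      gcongr with r hr
      · exact hv ▸ regionBound_ncard_region_zero_le hπ
      · exact regionBound_le_sSup hπ hmono hℓ1 hℓN hv hcover (Finset.mem_Icc.1 hr).1

end SPE
end

section
/- Let λ be a labeling function, v a vertex of the extended game with I(v) = J_ℓ, and i a player. If c = sup{Cost_i(ρ) | ρ ∈ Λ(v)} is finite, then c ≤ |V| + 2·mR(λ_ℓ) + Σ_{r=|J_ℓ|+1}^{|Π|} ( |V| + 2·max{mR(λ_j) : J_j > J_ℓ, |J_j|=r} ). Moreover, in both cases (c finite or infinite) there exists a lasso-shaped λ-consistent play ρ = h g^ω from v with |hg| ≤ 2·|𝐂(λ)| and Cost_i(ρ) = c. -/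
/-!
Call a time `q` of a `λ`-consistent play `ρ` unconstrained if every finite label `λ(ρ m)`,
`m ≤ q`, belongs to a player already in `(ρ q).2`. If `ρ p = ρ q` with `p < q` and `q`
unconstrained, the lasso `ρ[0,p) ρ[p,q)^ω` is again `λ`-consistent, and its cost for any player
is at least the cost along `ρ`, and infinite if that cost exceeds `q`.

Such repetitions cannot be avoided for long. The regions `(ρ n).2` form a chain, so a region is
identified by its size, and without such a repetition each region holds at most `|V|`
unconstrained times. A time constrained by `m` lies within `mR(S)` steps of `m`, where
`S = (ρ m).2`, and the owner constrained at `m` leaves `S` within `mR(S)` steps, so the times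
constrained from a common region span fewer than `2·mR(S)` steps. Hence every consistent play
has an early unconstrained repetition, giving the lasso, while a play of maximal finite cost `c`
has none before `c`, giving the bound on `c`.
-/

open scoped Classical

namespace SPE

variable {V : Type*} {P : Type*}

section Play

variable {E : V → V → Prop} {F : P → Set V} {x : XV V P} {ρ : ℕ → XV V P}

lemma IsPlay.snd_mono (hp : IsPlay E F x ρ) : Monotone fun n => (ρ n).2 :=
  monotone_nat_of_le_succ fun n => by rw [(hp.2 n).2]; exact Set.subset_union_left

lemma IsPlay.reflTransGen (hp : IsPlay E F x ρ) (n : ℕ) :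
    Relation.ReflTransGen (XEdge E F) x (ρ n) := by
  induction n with
  | zero => rw [hp.1]
  | succ n ih => exact ih.tail (hp.2 n)

lemma IsPlay.snd_eq_of_ncard_eq [Finite P] (hp : IsPlay E F x ρ) {m n : ℕ}
    (h : (ρ m).2.ncard = (ρ n).2.ncard) : (ρ m).2 = (ρ n).2 := by
  rcases le_total m n with hmn | hnm
  · exact Set.eq_of_subset_of_ncard_le (hp.snd_mono hmn) h.ge (Set.toFinite _)
  · exact (Set.eq_of_subset_of_ncard_le (hp.snd_mono hnm) h.le (Set.toFinite _)).symm

lemma IsPlay.ncard_snd_mem_Icc [Fintype P] (hp : IsPlay E F x ρ) (n : ℕ) :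
    (ρ n).2.ncard ∈ Finset.Icc x.2.ncard (Fintype.card P) := by
  refine Finset.mem_Icc.2 ⟨?_, ?_⟩
  · rw [← hp.1]
    exact Set.ncard_le_ncard (hp.snd_mono n.zero_le)
  · simpa using Set.ncard_le_card (ρ n).2

end Play

section Cost

variable {ρ σ : ℕ → XV V P} {j : P}

lemma costFrom_le_of_mem {n k : ℕ} (h : j ∈ (ρ (n + k)).2) : costFrom ρ n j ≤ k :=
  sInf_le ⟨k, h, rfl⟩

lemma exists_mem_of_costFrom_le {n b : ℕ} (h : costFrom ρ n j ≤ b) :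
    ∃ k ≤ b, j ∈ (ρ (n + k)).2 := by
  have hne : ((fun k : ℕ => (k : ℕ∞)) '' {k | j ∈ (ρ (n + k)).2}).Nonempty := by
    by_contra hempty
    rw [Set.not_nonempty_iff_eq_empty] at hempty
    simp [costFrom, hempty] at h
  obtain ⟨k, hk, hkcost⟩ := csInf_mem hne
  exact ⟨k, Nat.cast_le.1 (hkcost.trans_le h), hk⟩

lemma costFrom_le_costFrom {m n : ℕ}
    (h : ∀ k, j ∈ (ρ (m + k)).2 → ∃ k' ≤ k, j ∈ (σ (n + k')).2) :
    costFrom σ n j ≤ costFrom ρ m j := by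
  refine le_sInf ?_
  rintro _ ⟨k, hk, rfl⟩
  obtain ⟨k', hk', hmem⟩ := h k hk
  exact (costFrom_le_of_mem hmem).trans (Nat.cast_le.2 hk')

lemma cost_le_cost_comp {φ : ℕ → ℕ} (hφ : ∀ k, φ k ≤ k) : cost ρ j ≤ cost (ρ ∘ φ) j :=
  costFrom_le_costFrom fun k hk => ⟨φ k, hφ k, by simpa using hk⟩

variable {E : V → V → Prop} {F : P → Set V} {x : XV V P}

lemma IsPlay.cost_eq_top_or_le_of_periodic (hp : IsPlay E F x ρ) {p q : ℕ} (hq : 0 < q)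
    (hper : ∀ k, p ≤ k → ρ (k + q) = ρ k) (j : P) : cost ρ j = ⊤ ∨ cost ρ j ≤ (p + q : ℕ) := by
  refine (eq_or_ne (cost ρ j) ⊤).imp id fun hfin => costFrom_le_of_mem ?_
  obtain ⟨k, -, hk⟩ := exists_mem_of_costFrom_le (ENat.natCast_toNat hfin).ge
  rw [zero_add] at hk ⊢
  rcases le_or_gt k (p + q) with hkpq | hkpq
  · exact hp.snd_mono hkpq hk
  · have hloop : Function.Periodic (fun m => ρ (p + m)) q := fun m => by
      simpa [add_assoc] using hper (p + m) (by omega)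
    have hkmod : ρ k = ρ (p + (k - p) % q) := by
      simpa [show p + (k - p) = k by omega] using (hloop.map_mod_nat (k - p)).symm
    rw [hkmod] at hk
    exact hp.snd_mono (by have := Nat.mod_lt (k - p) hq; omega) hk

end Cost

section Pump

/-- One step around the lasso with stem `[0, p)` and loop `[p, q)`. -/
def pumpStep (p q a : ℕ) : ℕ := if a + 1 = q then p else a + 1

def pumpIdx (p q n : ℕ) : ℕ := (pumpStep p q)^[n] 0

variable {p q : ℕ}

lemma pumpStep_iterate_of_lt {a k : ℕ} (h : a + k < q) : (pumpStep p q)^[k] a = a + k := by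
  induction k with
  | zero => rfl
  | succ k ih =>
    rw [Function.iterate_succ_apply', ih (by omega), pumpStep, if_neg (by omega), add_assoc]

lemma pumpStep_iterate_sub {a : ℕ} (h : a < q) : (pumpStep p q)^[q - a] a = p := by
  obtain ⟨k, hk⟩ : ∃ k, q - a = k + 1 := ⟨q - a - 1, by omega⟩
  rw [hk, Function.iterate_succ_apply', pumpStep_iterate_of_lt (by omega), pumpStep,
    if_pos (by omega)]

lemma pumpStep_iterate_sub_self {a : ℕ} (hpa : p ≤ a) (haq : a < q) :
    (pumpStep p q)^[q - p] a = a := by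
  rw [show q - p = (a - p) + (q - a) by omega, Function.iterate_add_apply,
    pumpStep_iterate_sub haq, pumpStep_iterate_of_lt (by omega)]
  omega

lemma pumpIdx_add (n k : ℕ) : pumpIdx p q (n + k) = (pumpStep p q)^[k] (pumpIdx p q n) := by
  rw [pumpIdx, pumpIdx, add_comm, Function.iterate_add_apply]

lemma pumpIdx_lt (hpq : p < q) (n : ℕ) : pumpIdx p q n < q := by
  induction n with
  | zero => exact Nat.zero_lt_of_lt hpq
  | succ n ih =>
    rw [pumpIdx_add, Function.iterate_one, pumpStep]
    split_ifs <;> omega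

lemma pumpIdx_le (hpq : p < q) (n : ℕ) : pumpIdx p q n ≤ n := by
  induction n with
  | zero => rfl
  | succ n ih =>
    rw [pumpIdx_add, Function.iterate_one, pumpStep]
    split_ifs <;> omega

lemma le_pumpIdx (hpq : p < q) {n : ℕ} (hn : p ≤ n) : p ≤ pumpIdx p q n := by
  induction n, hn using Nat.le_induction with
  | base => rw [pumpIdx, pumpStep_iterate_of_lt (by omega), zero_add]
  | succ n _ ih =>
    rw [pumpIdx_add, Function.iterate_one, pumpStep]
    split_ifs <;> omega

lemma pumpIdx_add_sub (hpq : p < q) {k : ℕ} (hk : p ≤ k) :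
    pumpIdx p q (k + (q - p)) = pumpIdx p q k := by
  rw [pumpIdx_add, pumpStep_iterate_sub_self (le_pumpIdx hpq hk) (pumpIdx_lt hpq k)]

variable {α : Type*} {ρ : ℕ → α}

lemma comp_pumpIdx_add (hpq : p < q) (hst : ρ p = ρ q) {n k : ℕ} (hk : pumpIdx p q n + k ≤ q) :
    (ρ ∘ pumpIdx p q) (n + k) = ρ (pumpIdx p q n + k) := by
  rw [Function.comp_apply, pumpIdx_add]
  rcases hk.lt_or_eq with hlt | heq
  · rw [pumpStep_iterate_of_lt hlt]
  · rw [heq, show k = q - pumpIdx p q n by omega, pumpStep_iterate_sub (pumpIdx_lt hpq n), hst]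

end Pump

/-- Times constrained by some `m` are exactly those at which the counter graph `𝐂(λ)` carries
a counter other than `0` and `⊤`; at an unconstrained time `q` its vertex is determined by
`ρ q`. -/
def Constrains (own : V → P) (lam : XV V P → ℕ∞) (ρ : ℕ → XV V P) (m n : ℕ) : Prop :=
  m ≤ n ∧ own (ρ m).1 ∉ (ρ n).2 ∧ lam (ρ m) ≠ ⊤

section Lasso

variable {E : V → V → Prop} {F : P → Set V} {own : V → P} {lam : XV V P → ℕ∞}
  {x : XV V P} {ρ : ℕ → XV V P} {p q : ℕ}

lemma IsPlay.comp_pumpIdx (hp : IsPlay E F x ρ) (hpq : p < q) (hst : ρ p = ρ q) :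
    IsPlay E F x (ρ ∘ pumpIdx p q) := by
  refine ⟨hp.1, fun n => ?_⟩
  rw [comp_pumpIdx_add hpq hst (pumpIdx_lt hpq n)]
  exact hp.2 _

/-- A finite label met along the lasso belongs to a player already in `(ρ q).2`, and from that
point the lasso follows `ρ` up to time `q`. -/
lemma Consistent.comp_pumpIdx (hc : Consistent own lam ρ) (hpq : p < q) (hst : ρ p = ρ q)
    (hfree : ∀ m, ¬ Constrains own lam ρ m q) : Consistent own lam (ρ ∘ pumpIdx p q) := by
  intro n
  set a := pumpIdx p q n
  have ha : a < q := pumpIdx_lt hpq n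
  change costFrom _ n (own (ρ a).1) ≤ lam (ρ a)
  by_cases hfin : lam (ρ a) = ⊤
  · rw [hfin]; exact le_top
  have hq : own (ρ a).1 ∈ (ρ q).2 := by
    by_contra hpend
    exact hfree a ⟨ha.le, hpend, hfin⟩
  refine le_trans (costFrom_le_costFrom fun k hk => ?_) (hc a)
  refine ⟨min k (q - a), min_le_left _ _, ?_⟩
  rw [comp_pumpIdx_add hpq hst (by omega)]
  rcases le_total k (q - a) with hkq | hqk
  · rwa [min_eq_left hkq]
  · rwa [min_eq_right hqk, show a + (q - a) = q by omega]

lemma comp_pumpIdx_periodic (hpq : p < q) {k : ℕ} (hk : p ≤ k) :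
    (ρ ∘ pumpIdx p q) (k + (q - p)) = (ρ ∘ pumpIdx p q) k := by
  simp only [Function.comp_apply, pumpIdx_add_sub hpq hk]

lemma IsPlay.cost_comp_pumpIdx_eq_top (hp : IsPlay E F x ρ) (hpq : p < q) (hst : ρ p = ρ q)
    {j : P} (hj : (q : ℕ∞) < cost ρ j) : cost (ρ ∘ pumpIdx p q) j = ⊤ := by
  refine ((hp.comp_pumpIdx hpq hst).cost_eq_top_or_le_of_periodic (by omega)
    (fun k hk => comp_pumpIdx_periodic hpq hk) j).resolve_right fun hle => ?_
  rw [show p + (q - p) = q by omega] at hle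
  exact (hj.trans_le (cost_le_cost_comp (pumpIdx_le hpq))).not_ge hle

end Lasso

section MaxRange

variable [Finite V] [Finite P] {lam : XV V P → ℕ∞} {S T : Set (XV V P)}

lemma bddAbove_finite_values (lam : XV V P → ℕ∞) (S : Set (XV V P)) :
    BddAbove {c : ℕ | ∃ w ∈ S, lam w = (c : ℕ∞)} :=
  ((Set.finite_range fun w => (lam w).toNat).subset
    fun c (hc : ∃ w ∈ S, lam w = (c : ℕ∞)) => by
      obtain ⟨w, -, hw⟩ := hc
      exact ⟨w, by simp [hw]⟩).bddAbove

lemma lam_le_mR {w : XV V P} (hw : w ∈ S) (hfin : lam w ≠ ⊤) : lam w ≤ mR lam S := by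
  rw [← ENat.natCast_toNat hfin]
  exact Nat.cast_le.2 <|
    le_csSup (bddAbove_finite_values lam S) ⟨w, hw, (ENat.natCast_toNat hfin).symm⟩

lemma mR_mono (h : S ⊆ T) : mR lam S ≤ mR lam T :=
  csSup_le' fun _ ⟨w, hw, hc⟩ => le_csSup (bddAbove_finite_values lam T) ⟨w, h hw, hc⟩

end MaxRange

section Counting

variable [Fintype V] [Fintype P] {E : V → V → Prop} {F : P → Set V} {own : V → P}
  {lam : XV V P → ℕ∞} {x : XV V P} {ρ : ℕ → XV V P}

lemma card_le_of_forall_lt_add {s : Finset ℕ} {K : ℕ} (h : ∀ a ∈ s, ∀ b ∈ s, a < b + K) :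
    s.card ≤ K := by
  rcases s.eq_empty_or_nonempty with rfl | hs
  · simp
  calc s.card ≤ (Finset.Ico (s.min' hs) (s.min' hs + K)).card :=
        Finset.card_le_card fun a ha =>
          Finset.mem_Ico.2 ⟨s.min'_le a ha, h a ha _ (s.min'_mem hs)⟩
    _ = K := by simp

lemma Consistent.exists_mem_le_mR (hc : Consistent own lam ρ) {m : ℕ} (hfin : lam (ρ m) ≠ ⊤) :
    ∃ k ≤ mR lam {w | w.2 = (ρ m).2}, own (ρ m).1 ∈ (ρ (m + k)).2 :=
  exists_mem_of_costFrom_le ((hc m).trans (lam_le_mR rfl hfin))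

/-- `n` lies within `mR(S)` steps of `m`, and the owner constrained at `m'` leaves `S = (ρ m).2`
within `mR(S)` steps of `m'`, so `m` lies before that exit. -/
lemma lt_add_two_mul_mR (hp : IsPlay E F x ρ) (hc : Consistent own lam ρ) {m n m' n' : ℕ}
    (h : Constrains own lam ρ m n) (h' : Constrains own lam ρ m' n') (hS : (ρ m).2 = (ρ m').2) :
    n < n' + 2 * mR lam {w | w.2 = (ρ m).2} := by
  obtain ⟨-, hpend, hfin⟩ := h
  obtain ⟨hmn', hpend', hfin'⟩ := h'
  obtain ⟨k, hk, hmem⟩ := hc.exists_mem_le_mR hfin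
  obtain ⟨k', hk', hmem'⟩ := hc.exists_mem_le_mR hfin'
  rw [← hS] at hk'
  have hn : n < m + k := by
    by_contra! hle
    exact hpend (hp.snd_mono hle hmem)
  have hm : m < m' + k' := by
    by_contra! hle
    have hmem'' : own (ρ m').1 ∈ (ρ m').2 := hS ▸ hp.snd_mono hle hmem'
    exact hpend' (hp.snd_mono hmn' hmem'')
  omega

lemma card_filter_unconstrained_le (hp : IsPlay E F x ρ) {T : ℕ}
    (hT : ∀ p q, p < q → q < T → ρ p = ρ q → ¬ ∀ m, ¬ Constrains own lam ρ m q) :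
    ((Finset.range T).filter fun n => ∀ m, ¬ Constrains own lam ρ m n).card ≤
      (Finset.Icc x.2.ncard (Fintype.card P)).card * Fintype.card V := by
  rw [← Finset.card_univ (α := V), ← Finset.card_product]
  refine Finset.card_le_card_of_injOn (fun n => ((ρ n).2.ncard, (ρ n).1))
    (fun n _ => Finset.mem_product.2 ⟨hp.ncard_snd_mem_Icc n, Finset.mem_univ _⟩) ?_
  intro n hn n' hn' heq
  simp only [Finset.coe_filter, Finset.mem_range, Set.mem_ofPred_eq] at hn hn'
  have hρ : ρ n = ρ n' :=
    Prod.ext (congrArg Prod.snd heq) (hp.snd_eq_of_ncard_eq (congrArg Prod.fst heq))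
  by_contra hne
  rcases lt_or_gt_of_ne hne with h | h
  · exact hT n n' h hn'.1 hρ hn'.2
  · exact hT n' n h hn.1 hρ.symm hn.2

lemma card_filter_constrained_le (hp : IsPlay E F x ρ) (hc : Consistent own lam ρ) (M : ℕ → ℕ)
    (hM : ∀ n, mR lam {w | w.2 = (ρ n).2} ≤ M (ρ n).2.ncard) (T : ℕ) :
    ((Finset.range T).filter fun n => ∃ m, Constrains own lam ρ m n).card ≤
      ∑ r ∈ Finset.Icc x.2.ncard (Fintype.card P), 2 * M r := by
  set layer := fun r => (Finset.range T).filter fun n =>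
    ∃ m, Constrains own lam ρ m n ∧ (ρ m).2.ncard = r
  calc _ ≤ ((Finset.Icc x.2.ncard (Fintype.card P)).biUnion layer).card := by
        refine Finset.card_le_card fun n hn => ?_
        obtain ⟨hnT, m, hm⟩ := Finset.mem_filter.1 hn
        exact Finset.mem_biUnion.2 ⟨_, hp.ncard_snd_mem_Icc m,
          Finset.mem_filter.2 ⟨hnT, m, hm, rfl⟩⟩
    _ ≤ ∑ r ∈ Finset.Icc x.2.ncard (Fintype.card P), (layer r).card := Finset.card_biUnion_le
    _ ≤ _ := Finset.sum_le_sum fun r _ => card_le_of_forall_lt_add fun n hn n' hn' => by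
        obtain ⟨-, m, hm, rfl⟩ := Finset.mem_filter.1 hn
        obtain ⟨-, m', hm', hr⟩ := Finset.mem_filter.1 hn'
        calc n < n' + 2 * mR lam {w | w.2 = (ρ m).2} :=
              lt_add_two_mul_mR hp hc hm hm' (hp.snd_eq_of_ncard_eq hr.symm)
          _ ≤ n' + 2 * M (ρ m).2.ncard := by gcongr; exact hM m

lemma le_sum_of_forall_repeat_constrained (hp : IsPlay E F x ρ) (hc : Consistent own lam ρ)
    (M : ℕ → ℕ) (hM : ∀ n, mR lam {w | w.2 = (ρ n).2} ≤ M (ρ n).2.ncard) {T : ℕ}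
    (hT : ∀ p q, p < q → q < T → ρ p = ρ q → ¬ ∀ m, ¬ Constrains own lam ρ m q) :
    T ≤ ∑ r ∈ Finset.Icc x.2.ncard (Fintype.card P), (Fintype.card V + 2 * M r) := by
  calc T = ((Finset.range T).filter fun n => ∀ m, ¬ Constrains own lam ρ m n).card +
        ((Finset.range T).filter fun n => ¬ ∀ m, ¬ Constrains own lam ρ m n).card := by
        rw [Finset.card_filter_add_card_filter_not, Finset.card_range]
    _ ≤ (Finset.Icc x.2.ncard (Fintype.card P)).card * Fintype.card V +
        ∑ r ∈ Finset.Icc x.2.ncard (Fintype.card P), 2 * M r := by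
        gcongr
        · exact card_filter_unconstrained_le hp hT
        · simpa only [not_forall, not_not] using card_filter_constrained_le hp hc M hM T
    _ = _ := by rw [Finset.sum_add_distrib, Finset.sum_const, smul_eq_mul]

end Counting

lemma exists_cost_eq_sSup {E : V → V → Prop} {F : P → Set V} {own : V → P} {lam : XV V P → ℕ∞}
    {x : XV V P} (hne : (Lam E F own lam x).Nonempty) (i : P)
    (hlt : sSup ((fun ρ => cost ρ i) '' Lam E F own lam x) < ⊤) :
    ∃ ρ ∈ Lam E F own lam x, cost ρ i = sSup ((fun ρ => cost ρ i) '' Lam E F own lam x) :=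
  have := (hne.image fun ρ => cost ρ i).to_subtype
  ENat.sSup_mem_of_nonempty_of_lt_top hlt

section Lasso

variable [Fintype V] [Fintype P] {E : V → V → Prop} {F : P → Set V} {own : V → P}
  {lam : XV V P → ℕ∞} {x : XV V P}

lemma exists_repeat_unconstrained [Nonempty P] {ρ : ℕ → XV V P} (hρ : ρ ∈ Lam E F own lam x) :
    ∃ p q, p < q ∧ q ≤ 2 * (Fintype.card V * 2 ^ Fintype.card P *
        (mR lam Set.univ + 2) ^ Fintype.card P) ∧
      ρ p = ρ q ∧ ∀ m, ¬ Constrains own lam ρ m q := by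
  set R := mR lam Set.univ
  have hsum : ∑ r ∈ Finset.Icc x.2.ncard (Fintype.card P), (Fintype.card V + 2 * R) ≤
      2 * (Fintype.card V * 2 ^ Fintype.card P * (R + 2) ^ Fintype.card P) := by
    have hV : 1 ≤ Fintype.card V := Fintype.card_pos_iff.2 ⟨x.1⟩
    have hP : 1 ≤ Fintype.card P := Fintype.card_pos
    have hPpow : Fintype.card P + 1 ≤ 2 ^ Fintype.card P := Nat.lt_two_pow_self
    have hRpow : R + 2 ≤ (R + 2) ^ Fintype.card P := le_self_pow (by omega) (by omega)
    rw [Finset.sum_const, smul_eq_mul, Nat.card_Icc]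
    calc (Fintype.card P + 1 - x.2.ncard) * (Fintype.card V + 2 * R)
        ≤ 2 ^ Fintype.card P * (2 * Fintype.card V * (R + 2) ^ Fintype.card P) := by
          gcongr
          · omega
          · calc Fintype.card V + 2 * R ≤ 2 * Fintype.card V * (R + 2) := by nlinarith
              _ ≤ _ := by gcongr
      _ = _ := by ring
  by_contra! h
  have hT := le_sum_of_forall_repeat_constrained hρ.1 hρ.2 (fun _ => R)
    (fun _ => mR_mono (Set.subset_univ _)) (T := 2 * (Fintype.card V * 2 ^ Fintype.card P *
      (R + 2) ^ Fintype.card P) + 1) fun p q hpq hq hst hfree => by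
    obtain ⟨m, hm⟩ := h p q hpq (by omega) hst
    exact hfree m hm
  omega

lemma exists_lasso_cost_ge [Nonempty P] {ρ : ℕ → XV V P} (hρ : ρ ∈ Lam E F own lam x) :
    ∃ ρ' ∈ Lam E F own lam x, (∀ j, cost ρ j ≤ cost ρ' j) ∧
      ∃ p q : ℕ, 0 < q ∧
        p + q ≤ 2 * (Fintype.card V * 2 ^ Fintype.card P *
          (mR lam Set.univ + 2) ^ Fintype.card P) ∧
        ∀ k, p ≤ k → ρ' (k + q) = ρ' k := by
  obtain ⟨p, q, hpq, hqB, hst, hfree⟩ := exists_repeat_unconstrained hρ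
  refine ⟨ρ ∘ pumpIdx p q, ⟨hρ.1.comp_pumpIdx hpq hst, hρ.2.comp_pumpIdx hpq hst hfree⟩,
    fun j => cost_le_cost_comp (pumpIdx_le hpq), p, q - p, by omega, by omega,
    fun k hk => comp_pumpIdx_periodic hpq hk⟩

lemma exists_lasso_cost_eq_sSup (hne : (Lam E F own lam x).Nonempty) (i : P) :
    ∃ ρ ∈ Lam E F own lam x,
      cost ρ i = sSup ((fun ρ' => cost ρ' i) '' Lam E F own lam x) ∧
      ∃ p q : ℕ, 0 < q ∧
        p + q ≤ 2 * (Fintype.card V * 2 ^ Fintype.card P *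
          (mR lam Set.univ + 2) ^ Fintype.card P) ∧
        ∀ k, p ≤ k → ρ (k + q) = ρ k := by
  have : Nonempty P := ⟨i⟩
  set s := sSup ((fun ρ' => cost ρ' i) '' Lam E F own lam x)
  rcases eq_or_ne s ⊤ with htop | hfin
  · obtain ⟨_, ⟨ρ, hρ, rfl⟩, hlong⟩ := lt_sSup_iff.1 (htop ▸ ENat.natCast_lt_top
      (2 * (Fintype.card V * 2 ^ Fintype.card P * (mR lam Set.univ + 2) ^ Fintype.card P)))
    obtain ⟨ρ', hρ', hle, p, q, hq, hpqB, hper⟩ := exists_lasso_cost_ge hρ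
    refine ⟨ρ', hρ', ?_, p, q, hq, hpqB, hper⟩
    rw [htop]
    refine (hρ'.1.cost_eq_top_or_le_of_periodic hq hper i).resolve_right fun hshort => ?_
    exact (hlong.trans_le (hle i)).not_ge (hshort.trans (Nat.cast_le.2 hpqB))
  · obtain ⟨ρ, hρ, hcost⟩ := exists_cost_eq_sSup hne i hfin.lt_top
    obtain ⟨ρ', hρ', hle, hlasso⟩ := exists_lasso_cost_ge hρ
    exact ⟨ρ', hρ', le_antisymm (le_sSup ⟨ρ', hρ', rfl⟩) (hcost.symm.trans_le (hle i)), hlasso⟩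

end Lasso

/-- `max {mR(λ_j) | ℓ < j ≤ N, |J j| = r}` in the paper's notation. -/
noncomputable def layerMR (lam : XV V P → ℕ∞) (N : ℕ) (J : ℕ → Set P) (ℓ r : ℕ) : ℕ :=
  sSup {c : ℕ | ∃ j, ℓ < j ∧ j ≤ N ∧ (J j).ncard = r ∧ c = mR lam {w | w.2 = J j}}

section Regions

variable {E : V → V → Prop} {F : P → Set V} {own : V → P}
  {lam : XV V P → ℕ∞} {N : ℕ} {J : ℕ → Set P} {ℓ : ℕ} {v : XV V P}

lemma IsPlay.mR_le_layerMR (hmono : ∀ a b, 1 ≤ a → a ≤ N → 1 ≤ b → b ≤ N → J a ⊆ J b → a ≤ b)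
    (hℓ1 : 1 ≤ ℓ) (hℓN : ℓ ≤ N) (hv : v.2 = J ℓ)
    (hcover : ∀ w : XV V P, Relation.ReflTransGen (XEdge E F) v w →
      ∃ j, 1 ≤ j ∧ j ≤ N ∧ w.2 = J j)
    {ρ : ℕ → XV V P} (hp : IsPlay E F v ρ) {n : ℕ} (hn : (ρ n).2.ncard ≠ (J ℓ).ncard) :
    mR lam {w | w.2 = (ρ n).2} ≤ layerMR lam N J ℓ (ρ n).2.ncard := by
  obtain ⟨j, hj1, hjN, hJj⟩ := hcover _ (hp.reflTransGen n)
  have hsub : J ℓ ⊆ J j := by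
    rw [← hv, ← hJj, ← hp.1]
    exact hp.snd_mono n.zero_le
  have hℓj : ℓ < j := (hmono ℓ j hℓ1 hℓN hj1 hjN hsub).lt_of_ne fun h => hn (by rw [hJj, h])
  have hbdd : BddAbove {c : ℕ | ∃ j, ℓ < j ∧ j ≤ N ∧ (J j).ncard = (ρ n).2.ncard ∧
      c = mR lam {w | w.2 = J j}} := by
    refine ((Set.finite_Iic N).image fun j => mR lam {w | w.2 = J j}).bddAbove.mono ?_
    rintro _ ⟨j, -, hjN, -, rfl⟩
    exact ⟨j, hjN, rfl⟩
  exact le_csSup hbdd ⟨j, hℓj, hjN, by rw [hJj], by rw [hJj]⟩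

lemma le_of_sSup_cost_eq [Fintype V] [Fintype P]
    (hmono : ∀ a b, 1 ≤ a → a ≤ N → 1 ≤ b → b ≤ N → J a ⊆ J b → a ≤ b)
    (hℓ1 : 1 ≤ ℓ) (hℓN : ℓ ≤ N) (hv : v.2 = J ℓ)
    (hcover : ∀ w : XV V P, Relation.ReflTransGen (XEdge E F) v w →
      ∃ j, 1 ≤ j ∧ j ≤ N ∧ w.2 = J j)
    (hne : (Lam E F own lam v).Nonempty) (i : P) {c : ℕ}
    (hc : sSup ((fun ρ => cost ρ i) '' Lam E F own lam v) = (c : ℕ∞)) :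
    c ≤ Fintype.card V + 2 * mR lam {w | w.2 = J ℓ} +
      ∑ r ∈ Finset.Icc ((J ℓ).ncard + 1) (Fintype.card P),
        (Fintype.card V + 2 * layerMR lam N J ℓ r) := by
  obtain ⟨ρ, hρ, hcost⟩ := exists_cost_eq_sSup hne i (hc ▸ ENat.natCast_lt_top c)
  rw [hc] at hcost
  have hrep : ∀ p q, p < q → q < c → ρ p = ρ q → ¬ ∀ m, ¬ Constrains own lam ρ m q := by
    intro p q hpq hqc hst hfree
    have htop := hρ.1.cost_comp_pumpIdx_eq_top hpq hst (j := i) (by rw [hcost]; exact_mod_cast hqc)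
    have hle := le_sSup (s := (fun ρ => cost ρ i) '' Lam E F own lam v)
      ⟨_, ⟨hρ.1.comp_pumpIdx hpq hst, hρ.2.comp_pumpIdx hpq hst hfree⟩, htop⟩
    rw [hc] at hle
    exact ENat.natCast_ne_top c (top_le_iff.1 hle)
  set M := fun r => if r = (J ℓ).ncard then mR lam {w | w.2 = J ℓ} else layerMR lam N J ℓ r
  have hM : ∀ n, mR lam {w | w.2 = (ρ n).2} ≤ M (ρ n).2.ncard := by
    intro n
    simp only [M]
    split_ifs with hn
    · have h0 : (ρ 0).2 = J ℓ := by rw [hρ.1.1, hv]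
      rw [hρ.1.snd_eq_of_ncard_eq (hn.trans (congrArg _ h0.symm)), h0]
    · exact hρ.1.mR_le_layerMR hmono hℓ1 hℓN hv hcover hn
  have hn0 : (J ℓ).ncard ≤ Fintype.card P := by simpa using Set.ncard_le_card (J ℓ)
  calc c ≤ ∑ r ∈ Finset.Icc v.2.ncard (Fintype.card P), (Fintype.card V + 2 * M r) :=
        le_sum_of_forall_repeat_constrained hρ.1 hρ.2 M hM hrep
    _ = _ := by
      rw [hv, ← Finset.insert_Icc_add_one_left_eq_Icc hn0, Finset.sum_insert (by simp)]
      simp only [M, if_pos rfl]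
      congr 1
      refine Finset.sum_congr rfl fun r hr => ?_
      rw [if_neg (by simp only [Finset.mem_Icc] at hr; omega)]

end Regions

theorem stmt14_general {V P : Type*} [Fintype V] [Fintype P]
    (E : V → V → Prop) (F : P → Set V) (own : V → P) (lam : XV V P → ℕ∞)
    (N : ℕ) (J : ℕ → Set P)
    (hmono : ∀ a b, 1 ≤ a → a ≤ N → 1 ≤ b → b ≤ N → J a ⊆ J b → a ≤ b)
    (ℓ : ℕ) (hℓ1 : 1 ≤ ℓ) (hℓN : ℓ ≤ N)
    (v : XV V P) (hv : v.2 = J ℓ)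
    (hcover : ∀ w : XV V P, Relation.ReflTransGen (XEdge E F) v w →
      ∃ j, 1 ≤ j ∧ j ≤ N ∧ w.2 = J j)
    (i : P) (hne : (Lam E F own lam v).Nonempty) :
    (∀ c : ℕ, sSup ((fun ρ => cost ρ i) '' Lam E F own lam v) = (c : ℕ∞) →
      c ≤ Fintype.card V + 2 * mR lam {w | w.2 = J ℓ} +
      ∑ r ∈ Finset.Icc ((J ℓ).ncard + 1) (Fintype.card P),
        (Fintype.card V + 2 * sSup {c : ℕ | ∃ j, ℓ < j ∧ j ≤ N ∧
          (J j).ncard = r ∧ c = mR lam {w | w.2 = J j}})) ∧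
    (∃ ρ ∈ Lam E F own lam v,
      cost ρ i = sSup ((fun ρ' => cost ρ' i) '' Lam E F own lam v) ∧
      ∃ p q : ℕ, 0 < q ∧
        p + q ≤ 2 * (Fintype.card V * 2 ^ Fintype.card P *
          (mR lam Set.univ + 2) ^ Fintype.card P) ∧
        ∀ k, p ≤ k → ρ (k + q) = ρ k) :=
  ⟨fun _ hc => le_of_sSup_cost_eq hmono hℓ1 hℓN hv hcover hne i hc,
    exists_lasso_cost_eq_sSup hne i⟩

/-- if the supremum of the costs of player `i` over `Λ(v)` is a finite
value `c`, then `c` is bounded as in Lemma 4.8; moreover (in both the finite and the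
infinite case) the supremum is realized by a lasso-shaped `λ`-consistent play
`h·g^ω` with `|hg| ≤ 2·|𝐂(λ)|`. -/
theorem stmt14 {V P : Type*} [Fintype V] [Fintype P]
    (E : V → V → Prop) (F : P → Set V) (own : V → P) (lam : XV V P → ℕ∞)
    (htot : ∀ u : V, ∃ w, E u w)
    (N : ℕ) (J : ℕ → Set P)
    (hmono : ∀ a b, 1 ≤ a → a ≤ N → 1 ≤ b → b ≤ N → J a ⊆ J b → a ≤ b)
    (ℓ : ℕ) (hℓ1 : 1 ≤ ℓ) (hℓN : ℓ ≤ N)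
    (v : XV V P) (hv : v.2 = J ℓ)
    (hcover : ∀ w : XV V P, Relation.ReflTransGen (XEdge E F) v w →
      ∃ j, 1 ≤ j ∧ j ≤ N ∧ w.2 = J j)
    (i : P) (hne : (Lam E F own lam v).Nonempty) :
    (∀ c : ℕ, sSup ((fun ρ => cost ρ i) '' Lam E F own lam v) = (c : ℕ∞) →
      c ≤ Fintype.card V + 2 * mR lam {w | w.2 = J ℓ} +
      ∑ r ∈ Finset.Icc ((J ℓ).ncard + 1) (Fintype.card P),
        (Fintype.card V + 2 * sSup {c : ℕ | ∃ j, ℓ < j ∧ j ≤ N ∧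
          (J j).ncard = r ∧ c = mR lam {w | w.2 = J j}})) ∧
    (∃ ρ ∈ Lam E F own lam v,
      cost ρ i = sSup ((fun ρ' => cost ρ' i) '' Lam E F own lam v) ∧
      ∃ p q : ℕ, 0 < q ∧
        p + q ≤ 2 * (Fintype.card V * 2 ^ Fintype.card P *
          (mR lam Set.univ + 2) ^ Fintype.card P) ∧
        ∀ k, p ≤ k → ρ (k + q) = ρ k) :=
  stmt14_general E F own lam N J hmono ℓ hℓ1 hℓN v hv hcover i hne

end SPE
end
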